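/- arXiv:2605.14206 — 6 statements merged into one kernel-verified Lean document; each statement's English description precedes it below -/
import Mathlib

section
/- Let q = ((1−p)/m)^m. Then for every integer n ≥ 1, P(T_{m,p} ≥ n) ≤ (1 − q)^{⌈(n−m)/m⌉}. In particular, the power series Σ_{n≥0} P(T_{m,p} = n) z^n has radius of convergence at least (1−q)^{−1/m} > 1. -/
noncomputable section

/-- Generalised binomial coefficient `C(z, k) = z (z-1) ⋯ (z-k+1) / k!`. -/
def genBinom (z : ℝ) (k : ℕ) : ℝ :=
  (∏ j ∈ Finset.range k, (z - (j : ℝ))) / (Nat.factorial k : ℝ)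

/-- `lastTime C i n ω` is the last day `k ∈ {1, …, n}` on which coupon `i` was issued
(`0` if there is no such day). -/
def lastTime {Ω : Type*} (C : ℕ → Ω → ℕ) (i n : ℕ) (ω : Ω) : ℕ :=
  sSup {k | 1 ≤ k ∧ k ≤ n ∧ C k ω = i}

/-- The clumsy coupon collection time `T_{m,p}`:
the first day `n ≥ 1` such that every coupon type `i ∈ {1, …, m}` has been issued at least
once and, letting `L(i,n)` be the day of its most recent issue, the update on day `L(i,n)`
was not clumsy (i.e. `U_{L(i,n)} ≤ 1 - p`). -/
def collectTime {Ω : Type*} (m : ℕ) (p : ℝ) (C : ℕ → Ω → ℕ) (U : ℕ → Ω → ℝ) (ω : Ω) : ℕ :=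
  sInf {n | 1 ≤ n ∧ ∀ i ∈ Finset.Icc 1 m,
    0 < lastTime C i n ω ∧ U (lastTime C i n ω) ω ≤ 1 - p}

/-- The data of the clumsy coupon collector model with `m` coupon types and clumsiness
probability `p`: an underlying probability space carrying the daily coupon choices `C n`
(uniform on `{1, …, m}`) and the clumsiness variables `U n` (uniform on `(0,1)`),
the whole family `{C n, U n}` being independent. -/
structure ClumsySetup (m : ℕ) (p : ℝ) where
  Ω : Type
  [mea : MeasurableSpace Ω]
  μ : MeasureTheory.Measure Ω
  prob : MeasureTheory.IsProbabilityMeasure μ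
  C : ℕ → Ω → ℕ
  U : ℕ → Ω → ℝ
  measC : ∀ n, Measurable (C n)
  measU : ∀ n, Measurable (U n)
  lawC : ∀ n, ∀ i ∈ Finset.Icc 1 m, μ {ω | C n ω = i} = (m : ENNReal)⁻¹
  lawU : ∀ n, MeasureTheory.Measure.map (U n) μ
    = MeasureTheory.volume.restrict (Set.Ioo (0:ℝ) 1)
  indep : ProbabilityTheory.iIndepFun
    (Sum.elim (fun n ω => ((C n ω : ℝ))) U) μ

open MeasureTheory ProbabilityTheory Filter


section CCAux

attribute [instance] ClumsySetup.mea

variable {m : ℕ} {p : ℝ}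

lemma measU_event (S : ClumsySetup m p) (hp : p ∈ Set.Ico (0:ℝ) 1) (n : ℕ) :
    S.μ {ω | S.U n ω ≤ 1 - p} = ENNReal.ofReal (1 - p) := by
  have h0 : 0 < 1 - p := by linarith [hp.2]
  have h1 : 1 - p ≤ 1 := by linarith [hp.1]
  have heq : {ω | S.U n ω ≤ 1 - p} = S.U n ⁻¹' Set.Iic (1 - p) := rfl
  rw [heq, ← Measure.map_apply (S.measU n) measurableSet_Iic, S.lawU n,
    Measure.restrict_apply measurableSet_Iic]
  have hsub1 : Set.Iic (1-p) ∩ Set.Ioo 0 1 ⊆ Set.Ioc 0 (1-p) :=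
    fun x hx => ⟨hx.2.1, hx.1⟩
  have hsub2 : Set.Ioo 0 (1-p) ⊆ Set.Iic (1-p) ∩ Set.Ioo 0 1 :=
    fun x hx => ⟨le_of_lt hx.2, hx.1, lt_of_lt_of_le hx.2 h1⟩
  have hb1 := measure_mono (μ := volume) hsub1
  have hb2 := measure_mono (μ := volume) hsub2
  rw [Real.volume_Ioc, sub_zero] at hb1
  rw [Real.volume_Ioo, sub_zero] at hb2
  exact le_antisymm hb1 hb2

/-- the "good block" event -/
def blockEvent (S : ClumsySetup m p) (k : ℕ) : Set S.Ω :=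
  ⋂ j ∈ Finset.Icc 1 m, ({ω | S.C (k*m+j) ω = j} ∩ {ω | S.U (k*m+j) ω ≤ 1-p})

lemma mem_blockEvent {S : ClumsySetup m p} {k : ℕ} {ω : S.Ω} :
    ω ∈ blockEvent S k ↔ ∀ j ∈ Finset.Icc 1 m,
      S.C (k*m+j) ω = j ∧ S.U (k*m+j) ω ≤ 1-p := by
  simp [blockEvent, Set.mem_iInter]

lemma blockEvent_measurableSet (S : ClumsySetup m p) (k : ℕ) :
    MeasurableSet (blockEvent S k) := by
  refine MeasurableSet.iInter fun j => MeasurableSet.iInter fun hj => MeasurableSet.inter ?_ ?_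
  · exact S.measC (k*m+j) (show MeasurableSet {j} from trivial)
  · exact S.measU (k*m+j) measurableSet_Iic

/-- the coordinate functions -/
def coordFun (S : ClumsySetup m p) : ℕ ⊕ ℕ → S.Ω → ℝ :=
  Sum.elim (fun n ω => ((S.C n ω : ℝ))) S.U

lemma coordFun_measurable (S : ClumsySetup m p) (s : ℕ ⊕ ℕ) : Measurable (coordFun S s) := by
  cases s with
  | inl n =>
      have : Measurable (Nat.cast : ℕ → ℝ) := measurable_from_top
      exact this.comp (S.measC n)
  | inr n => exact S.measU n

/-- the sigma algebra of a single coordinate -/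
def coordAlg (S : ClumsySetup m p) (s : ℕ ⊕ ℕ) : MeasurableSpace S.Ω :=
  MeasurableSpace.comap (coordFun S s) inferInstance

lemma measC_coordAlg (S : ClumsySetup m p) (r j : ℕ) :
    MeasurableSet[coordAlg S (Sum.inl r)] {ω | S.C r ω = j} := by
  refine ⟨{(j : ℝ)}, measurableSet_singleton _, ?_⟩
  ext ω
  simp [coordFun, Nat.cast_inj]

lemma measU_coordAlg (S : ClumsySetup m p) (r : ℕ) :
    MeasurableSet[coordAlg S (Sum.inr r)] {ω | S.U r ω ≤ 1 - p} := by
  exact ⟨Set.Iic (1-p), measurableSet_Iic, rfl⟩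

lemma blockEvent_measurable_sup (S : ClumsySetup m p) (k : ℕ) (A : Set (ℕ ⊕ ℕ))
    (hA : ∀ j ∈ Finset.Icc 1 m, Sum.inl (k*m+j) ∈ A ∧ Sum.inr (k*m+j) ∈ A) :
    MeasurableSet[⨆ s ∈ A, coordAlg S s] (blockEvent S k) := by
  refine MeasurableSet.iInter fun j => MeasurableSet.iInter fun hj => MeasurableSet.inter ?_ ?_
  · exact le_biSup (coordAlg S) (hA j hj).1 _ (measC_coordAlg S (k*m+j) j)
  · exact le_biSup (coordAlg S) (hA j hj).2 _ (measU_coordAlg S (k*m+j))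

lemma indep_blocks (S : ClumsySetup m p) (K : ℕ) :
    Indep (⨆ s ∈ (Sum.elim id id) ⁻¹' (Set.Icc 1 (K*m)), coordAlg S s)
          (⨆ s ∈ (Sum.elim id id) ⁻¹' (Set.Icc (K*m+1) (K*m+m)), coordAlg S s) S.μ := by
  refine indep_iSup_of_disjoint (fun s => (coordFun_measurable S s).comap_le) S.indep.iIndep ?_
  refine Disjoint.preimage _ ?_
  rw [Set.disjoint_left]
  intro a ha ha'
  simp only [Set.mem_Icc] at ha ha'
  omega

lemma meas_blockEvent (S : ClumsySetup m p) (hm : 1 ≤ m) (hp : p ∈ Set.Ico (0:ℝ) 1) (k : ℕ) :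
    S.μ (blockEvent S k) = ENNReal.ofReal (((1-p)/m)^m) := by
  classical
  have hm0 : (0:ℝ) < m := by exact_mod_cast hm
  have hp1 : 0 ≤ 1 - p := by linarith [hp.2]
  set Sk : Finset (ℕ ⊕ ℕ) :=
    (Finset.Icc 1 m).image (fun j => Sum.inl (k*m+j)) ∪
    (Finset.Icc 1 m).image (fun j => Sum.inr (k*m+j)) with hSk
  set E : ℕ ⊕ ℕ → Set S.Ω :=
    Sum.elim (fun r => {ω | S.C r ω = r - k*m}) (fun r => {ω | S.U r ω ≤ 1-p}) with hE
  have hEinl : ∀ j, E (Sum.inl (k*m+j)) = {ω | S.C (k*m+j) ω = j} := by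
    intro j; simp [hE, Nat.add_sub_cancel_left]
  have hEinr : ∀ j, E (Sum.inr (k*m+j)) = {ω | S.U (k*m+j) ω ≤ 1-p} := by
    intro j; simp [hE]
  have claim1 : blockEvent S k = ⋂ s ∈ Sk, E s := by
    ext ω
    rw [mem_blockEvent]
    simp only [Set.mem_iInter, hSk, Finset.mem_union, Finset.mem_image]
    constructor
    · rintro h s (⟨j, hj, rfl⟩ | ⟨j, hj, rfl⟩)
      · rw [hEinl j]; exact (h j hj).1
      · rw [hEinr j]; exact (h j hj).2
    · intro h j hj
      refine ⟨?_, ?_⟩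
      · have := h (Sum.inl (k*m+j)) (Or.inl ⟨j, hj, rfl⟩)
        rwa [hEinl j] at this
      · have := h (Sum.inr (k*m+j)) (Or.inr ⟨j, hj, rfl⟩)
        rwa [hEinr j] at this
  have measE : ∀ s : ℕ ⊕ ℕ, MeasurableSet[coordAlg S s] (E s) := by
    rintro (r | r)
    · exact measC_coordAlg S r (r - k*m)
    · exact measU_coordAlg S r
  have claim2 : S.μ (⋂ s ∈ Sk, E s) = ∏ s ∈ Sk, S.μ (E s) :=
    S.indep.meas_biInter (fun s _ => measE s)
  have hdisj : Disjoint ((Finset.Icc 1 m).image (fun j => Sum.inl (k*m+j)))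
      ((Finset.Icc 1 m).image (fun j => Sum.inr (k*m+j))) := by
    rw [Finset.disjoint_left]
    intro s hs1 hs2
    rw [Finset.mem_image] at hs1 hs2
    obtain ⟨j, hj, rfl⟩ := hs1
    obtain ⟨j', hj', h⟩ := hs2
    exact absurd h (by simp)
  have hinj1 : Set.InjOn (fun j => (Sum.inl (k*m+j) : ℕ ⊕ ℕ)) (Finset.Icc 1 m) := by
    intro a _ b _ h; simpa using h
  have hinj2 : Set.InjOn (fun j => (Sum.inr (k*m+j) : ℕ ⊕ ℕ)) (Finset.Icc 1 m) := by
    intro a _ b _ h; simpa using h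
  rw [claim1, claim2, Finset.prod_union hdisj, Finset.prod_image hinj1, Finset.prod_image hinj2]
  have e1 : ∀ j ∈ Finset.Icc 1 m, S.μ (E (Sum.inl (k*m+j))) = (m : ENNReal)⁻¹ := by
    intro j hj; rw [hEinl j]; exact S.lawC (k*m+j) j hj
  have e2 : ∀ j ∈ Finset.Icc 1 m, S.μ (E (Sum.inr (k*m+j))) = ENNReal.ofReal (1-p) := by
    intro j hj; rw [hEinr j]; exact measU_event S hp (k*m+j)
  rw [Finset.prod_congr rfl e1, Finset.prod_congr rfl e2, Finset.prod_const, Finset.prod_const,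
    Nat.card_Icc]
  have hcard : m + 1 - 1 = m := by omega
  rw [hcard, ← mul_pow, ENNReal.ofReal_pow (by positivity)]
  congr 1
  rw [ENNReal.ofReal_div_of_pos hm0, ENNReal.ofReal_natCast, div_eq_mul_inv, mul_comm]

lemma iter_bound (S : ClumsySetup m p) (hm : 1 ≤ m) (hp : p ∈ Set.Ico (0:ℝ) 1) (K : ℕ) :
    S.μ (⋂ k ∈ Finset.range K, (blockEvent S k)ᶜ)
      ≤ ENNReal.ofReal (1 - ((1-p)/m)^m) ^ K := by
  haveI := S.prob
  have hm0 : (0:ℝ) < m := by exact_mod_cast hm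
  have hx : (0:ℝ) ≤ (1-p)/m := div_nonneg (by linarith [hp.2]) (le_of_lt hm0)
  have hq0 : 0 ≤ ((1-p)/m)^m := pow_nonneg hx m
  have hq1 : ((1-p)/m)^m ≤ 1 := by
    apply pow_le_one₀ hx
    rw [div_le_one hm0]
    have : (1:ℝ) ≤ m := by exact_mod_cast hm
    linarith [hp.1]
  induction K with
  | zero => simp
  | succ K ih =>
    rw [Finset.range_add_one, Finset.set_biInter_insert, Set.inter_comm]
    have hind := indep_blocks S K
    rw [Indep_iff] at hind
    have hB : MeasurableSet[⨆ s ∈ (Sum.elim id id) ⁻¹' (Set.Icc (K*m+1) (K*m+m)),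
        coordAlg S s] (blockEvent S K)ᶜ := by
      refine MeasurableSet.compl (blockEvent_measurable_sup S K _ (fun j hj => ?_))
      rw [Finset.mem_Icc] at hj
      constructor <;> simp [Set.mem_preimage, Set.mem_Icc] <;> omega
    have hA : MeasurableSet[⨆ s ∈ (Sum.elim id id) ⁻¹' (Set.Icc 1 (K*m)),
        coordAlg S s] (⋂ k ∈ Finset.range K, (blockEvent S k)ᶜ) := by
      refine MeasurableSet.iInter fun k => MeasurableSet.iInter fun hk => ?_
      rw [Finset.mem_range] at hk
      refine MeasurableSet.compl (blockEvent_measurable_sup S k _ (fun j hj => ?_))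
      rw [Finset.mem_Icc] at hj
      have h1 : (k+1)*m ≤ K*m := Nat.mul_le_mul_right m (by omega)
      have h2 : (k+1)*m = k*m + m := by ring
      constructor <;> simp [Set.mem_preimage, Set.mem_Icc] <;> omega
    have heq := hind _ _ hA hB
    rw [heq]
    have hBc : S.μ (blockEvent S K)ᶜ = ENNReal.ofReal (1 - ((1-p)/m)^m) := by
      rw [measure_compl (blockEvent_measurableSet S K) (measure_ne_top _ _),
        meas_blockEvent S hm hp K, measure_univ, ENNReal.ofReal_sub 1 hq0,
        ENNReal.ofReal_one]
    rw [hBc, pow_succ]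
    exact mul_le_mul' ih le_rfl

lemma tail_subset (S : ClumsySetup m p) (hm : 1 ≤ m) (n : ℕ) :
    {ω | n ≤ collectTime m p S.C S.U ω} ⊆
      ⋂ k ∈ Finset.range ((n-1)/m), (blockEvent S k)ᶜ := by
  intro ω hω
  simp only [Set.mem_iInter, Finset.mem_range]
  intro k hk hG
  rw [mem_blockEvent] at hG
  have heqm : (k+1)*m = k*m + m := by ring
  have hmem : (k+1)*m ∈ {n' | 1 ≤ n' ∧ ∀ i ∈ Finset.Icc 1 m,
      0 < lastTime S.C i n' ω ∧ S.U (lastTime S.C i n' ω) ω ≤ 1 - p} := by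
    constructor
    · omega
    · intro i hi
      rw [Finset.mem_Icc] at hi
      have hGi := hG i (Finset.mem_Icc.mpr hi)
      have hL : lastTime S.C i ((k+1)*m) ω = k*m + i := by
        have hmem2 : k*m + i ∈ {r | 1 ≤ r ∧ r ≤ (k+1)*m ∧ S.C r ω = i} :=
          ⟨by omega, by omega, hGi.1⟩
        have hbdd : BddAbove {r | 1 ≤ r ∧ r ≤ (k+1)*m ∧ S.C r ω = i} :=
          ⟨(k+1)*m, fun r hr => hr.2.1⟩
        refine le_antisymm ?_ (le_csSup hbdd hmem2)
        refine csSup_le ⟨_, hmem2⟩ ?_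
        intro r hr
        by_contra hlt
        push_neg at hlt
        have h1 : r ≤ (k+1)*m := hr.2.1
        have hrj : r = k*m + (r - k*m) := by omega
        have hji : i < r - k*m ∧ r - k*m ≤ m := by omega
        have hGj := hG (r - k*m) (Finset.mem_Icc.mpr ⟨by omega, hji.2⟩)
        have hCr := hr.2.2
        rw [hrj] at hCr
        omega
      rw [hL]
      exact ⟨by omega, hGi.2⟩
  have hT : collectTime m p S.C S.U ω ≤ (k+1)*m := Nat.sInf_le hmem
  have hωn : n ≤ collectTime m p S.C S.U ω := hω
  have h2 : (k+1)*m ≤ ((n-1)/m)*m := Nat.mul_le_mul_right m (by omega)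
  have h3 : ((n-1)/m)*m ≤ n-1 := Nat.div_mul_le_self _ _
  omega

lemma tail_bound (S : ClumsySetup m p) (hm : 1 ≤ m) (hp : p ∈ Set.Ico (0:ℝ) 1) (n : ℕ) :
    S.μ {ω | n ≤ collectTime m p S.C S.U ω}
      ≤ ENNReal.ofReal (1 - ((1-p)/m)^m) ^ ((n-1)/m) :=
  (measure_mono (tail_subset S hm n)).trans (iter_bound S hm hp ((n-1)/m))

end CCAux

/-- geometric tail bound and radius of convergence:
with `q = ((1-p)/m)^m`, for every `n ≥ 1` one has
`P(T_{m,p} ≥ n) ≤ (1-q)^{⌈(n-m)/m⌉}`; consequently the power series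
`∑_n P(T_{m,p} = n) z^n` converges (absolutely) for `|z| < (1-q)^{-1/m}`, a radius
which exceeds `1`. -/
theorem stmt1 (m : ℕ) (hm : 1 ≤ m) (p : ℝ) (hp : p ∈ Set.Ico (0:ℝ) 1)
    (S : ClumsySetup m p) :
    (∀ n : ℕ, 1 ≤ n →
      S.μ {ω | n ≤ collectTime m p S.C S.U ω}
        ≤ ENNReal.ofReal
            ((1 - ((1 - p) / m) ^ m) ^ (⌈((n : ℝ) - (m : ℝ)) / (m : ℝ)⌉))) ∧
    (∀ z : ℝ,
      ENNReal.ofReal |z| < ENNReal.ofReal (1 - ((1 - p) / m) ^ m) ^ (-(1 / (m : ℝ))) →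
      Summable (fun n : ℕ =>
        (S.μ {ω | collectTime m p S.C S.U ω = n}).toReal * z ^ n)) ∧
    1 < ENNReal.ofReal (1 - ((1 - p) / m) ^ m) ^ (-(1 / (m : ℝ))) := by
  have hm0 : (0:ℝ) < m := by exact_mod_cast hm
  have hx : (0:ℝ) ≤ (1-p)/m := div_nonneg (by linarith [hp.2]) (le_of_lt hm0)
  have hq0 : 0 ≤ ((1-p)/m)^m := pow_nonneg hx m
  have hq0' : 0 < ((1-p)/m)^m := pow_pos (div_pos (by linarith [hp.2]) hm0) m
  have hq1 : ((1-p)/m)^m ≤ 1 := by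
    apply pow_le_one₀ hx
    rw [div_le_one hm0]
    have : (1:ℝ) ≤ m := by exact_mod_cast hm
    linarith [hp.1]
  set b : ℝ := 1 - ((1-p)/m)^m with hbdef
  have hb0 : 0 ≤ b := by simp only [hbdef]; linarith
  have hb1 : b ≤ 1 := by simp only [hbdef]; linarith
  have hblt1 : b < 1 := by simp only [hbdef]; linarith
  -- key arithmetic: n ≤ ((n-1)/m + 1) * m
  have haux : ∀ n : ℕ, n ≤ ((n-1)/m + 1) * m := by
    intro n
    have h1 := Nat.div_add_mod (n-1) m
    have h2 := Nat.mod_lt (n-1) (show 0 < m by omega)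
    rw [add_mul, one_mul]
    rw [mul_comm] at h1
    omega
  -- Part 1
  have part1 : ∀ n : ℕ, 1 ≤ n →
      S.μ {ω | n ≤ collectTime m p S.C S.U ω}
        ≤ ENNReal.ofReal (b ^ (⌈((n : ℝ) - (m : ℝ)) / (m : ℝ)⌉)) := by
    intro n hn
    set K : ℕ := (n-1)/m with hK
    set c : ℤ := ⌈((n : ℝ) - (m : ℝ)) / (m : ℝ)⌉ with hc
    have hc0 : 0 ≤ c := by
      have h1 : ((-1 : ℤ) : ℝ) < ((n : ℝ) - (m : ℝ)) / (m : ℝ) := by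
        rw [lt_div_iff₀ hm0]
        push_cast
        have : (1:ℝ) ≤ n := by exact_mod_cast hn
        nlinarith
      have := Int.lt_ceil.mpr h1
      omega
    have hcK : c ≤ (K : ℤ) := by
      apply Int.ceil_le.mpr
      rw [div_le_iff₀ hm0]
      have h1 : (n : ℝ) ≤ ((K+1)*m : ℕ) := by exact_mod_cast (haux n)
      push_cast at h1 ⊢
      nlinarith
    have hKb : b ^ K ≤ b ^ (c.toNat) :=
      pow_le_pow_of_le_one hb0 hb1 (by omega)
    have hzc : b ^ c = b ^ (c.toNat) := by
      have h := Int.toNat_of_nonneg hc0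
      rw [← zpow_natCast b c.toNat, h]
    calc S.μ {ω | n ≤ collectTime m p S.C S.U ω}
        ≤ ENNReal.ofReal b ^ K := tail_bound S hm hp n
      _ = ENNReal.ofReal (b ^ K) := (ENNReal.ofReal_pow hb0 K).symm
      _ ≤ ENNReal.ofReal (b ^ (c.toNat)) := ENNReal.ofReal_le_ofReal hKb
      _ = ENNReal.ofReal (b ^ c) := by rw [hzc]
  refine ⟨part1, ?_, ?_⟩
  · -- Part 2: summability
    intro z hz
    have hbound : ∀ n : ℕ, (S.μ {ω | collectTime m p S.C S.U ω = n}).toReal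
        ≤ b ^ ((n-1)/m) := by
      intro n
      have hsub : {ω | collectTime m p S.C S.U ω = n}
          ⊆ {ω | n ≤ collectTime m p S.C S.U ω} :=
        fun ω hω => by
          have h : collectTime m p S.C S.U ω = n := hω
          exact le_of_eq h.symm
      have h1 : S.μ {ω | collectTime m p S.C S.U ω = n}
          ≤ ENNReal.ofReal (b ^ ((n-1)/m)) := by
        refine (measure_mono hsub).trans ?_
        rw [ENNReal.ofReal_pow hb0]
        exact tail_bound S hm hp n
      exact ENNReal.toReal_le_of_le_ofReal (pow_nonneg hb0 _) h1
    by_cases hb : b = 0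
    · apply summable_of_ne_finset_zero (s := Finset.range (m+1))
      intro n hn
      rw [Finset.mem_range, not_lt] at hn
      have hK1 : 1 ≤ (n-1)/m := (Nat.le_div_iff_mul_le (by omega)).mpr (by omega)
      have h1 := hbound n
      rw [hb, zero_pow (by omega)] at h1
      have h2 : (S.μ {ω | collectTime m p S.C S.U ω = n}).toReal = 0 :=
        le_antisymm h1 ENNReal.toReal_nonneg
      simp [h2]
    · have hb0' : 0 < b := lt_of_le_of_ne hb0 (Ne.symm hb)
      have hz' : |z| < b ^ (-(1/(m:ℝ))) := by
        rw [ENNReal.ofReal_rpow_of_pos hb0'] at hz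
        exact (ENNReal.ofReal_lt_ofReal_iff (Real.rpow_pos_of_pos hb0' _)).mp hz
      set w : ℝ := b ^ ((1/(m:ℝ))) * |z| with hw
      have hpos : 0 < b ^ ((1/(m:ℝ))) := Real.rpow_pos_of_pos hb0' _
      have hw0 : 0 ≤ w := mul_nonneg (le_of_lt hpos) (abs_nonneg z)
      have hw1 : w < 1 := by
        calc w < b ^ ((1/(m:ℝ))) * b ^ (-(1/(m:ℝ))) :=
              mul_lt_mul_of_pos_left hz' hpos
          _ = 1 := by rw [← Real.rpow_add hb0']; simp
      refine Summable.of_norm_bounded (g := fun n => b⁻¹ * w ^ n)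
        ((summable_geometric_of_lt_one hw0 hw1).mul_left _) (fun n => ?_)
      have hnorm : ‖(S.μ {ω | collectTime m p S.C S.U ω = n}).toReal * z ^ n‖
          = (S.μ {ω | collectTime m p S.C S.U ω = n}).toReal * |z| ^ n := by
        rw [Real.norm_eq_abs, abs_mul, abs_pow, abs_of_nonneg ENNReal.toReal_nonneg]
      rw [hnorm]
      have hstep1 : (S.μ {ω | collectTime m p S.C S.U ω = n}).toReal * |z| ^ n
          ≤ b ^ ((n-1)/m) * |z| ^ n :=
        mul_le_mul_of_nonneg_right (hbound n) (pow_nonneg (abs_nonneg z) n)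
      refine hstep1.trans ?_
      have hKn : (n:ℝ)/m - 1 ≤ (((n-1)/m : ℕ) : ℝ) := by
        have h1 : (n : ℝ) ≤ ((((n-1)/m)+1)*m : ℕ) := by exact_mod_cast (haux n)
        rw [sub_le_iff_le_add, div_le_iff₀ hm0]
        push_cast at h1 ⊢
        nlinarith
      have hkey : b ^ ((n-1)/m) ≤ b⁻¹ * (b ^ ((1/(m:ℝ)))) ^ n := by
        have e1 : b ^ ((n-1)/m) = b ^ ((((n-1)/m : ℕ)) : ℝ) :=
          (Real.rpow_natCast b _).symm
        have e2 : (b ^ ((1/(m:ℝ)))) ^ n = b ^ ((n:ℝ)/m) := by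
          rw [← Real.rpow_natCast (b ^ ((1/(m:ℝ)))) n, ← Real.rpow_mul hb0]
          congr 1
          field_simp
        have e3 : b⁻¹ * b ^ ((n:ℝ)/m) = b ^ ((n:ℝ)/m - 1) := by
          rw [Real.rpow_sub hb0', Real.rpow_one]; ring
        rw [e1, e2, e3]
        exact Real.rpow_le_rpow_of_exponent_ge hb0' hb1 hKn
      calc b ^ ((n-1)/m) * |z| ^ n ≤ (b⁻¹ * (b ^ ((1/(m:ℝ)))) ^ n) * |z| ^ n :=
            mul_le_mul_of_nonneg_right hkey (pow_nonneg (abs_nonneg z) n)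
        _ = b⁻¹ * w ^ n := by rw [hw, mul_pow]; ring
  · -- Part 3
    by_cases hb : b = 0
    · rw [hb, ENNReal.ofReal_zero, ENNReal.zero_rpow_of_neg (by
        have : (0:ℝ) < 1/(m:ℝ) := by positivity
        linarith)]
      exact ENNReal.one_lt_top
    · have hb0' : 0 < b := lt_of_le_of_ne hb0 (Ne.symm hb)
      rw [ENNReal.rpow_neg, ENNReal.one_lt_inv]
      exact ENNReal.rpow_lt_one (ENNReal.ofReal_lt_one.mpr hblt1) (by positivity)
end
end

section
/- Every word w ∈ H admits a factorisation w = j.g (concatenation) with j ∈ J and g ∈ G, this factorisation is unique, and conversely every concatenation j.g with j ∈ J and g ∈ G belongs to H; that is, H equals the concatenation language J.G and the pair (J,G) is well-defined for concatenation. -/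
noncomputable section

/-- The probability weight of a word over the alphabet `{c_1, …, c_m, d_1, …, d_m}`,
encoded as `Fin m ⊕ Fin m` where `Sum.inl i` is the letter `c_i` (a successful collection
of coupon `i`, of probability `(1-p)/m`) and `Sum.inr i` is the letter `d_i` (a clumsy
loss of coupon `i`, of probability `p/m`); the weight of a word is the product of the
weights of its letters. -/
def wordWeight (m : ℕ) (p : ℝ) (w : List (Fin m ⊕ Fin m)) : ℝ :=
  (w.map (Sum.elim (fun _ => (1 - p) / (m : ℝ)) (fun _ => p / (m : ℝ)))).prod

/-- The language `H`: words in which, for every `i`, the letter `c_i` occurs and its final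
occurrence is not followed by any `d_i`. -/
def langH (m : ℕ) : Set (List (Fin m ⊕ Fin m)) :=
  {w | ∀ i : Fin m, ∃ u v : List (Fin m ⊕ Fin m),
    w = u ++ Sum.inl i :: v ∧ Sum.inl i ∉ v ∧ Sum.inr i ∉ v}

/-- The language `G`: words in which, for every `i`, if `d_i` occurs then its final
occurrence is followed by some `c_i`. -/
def langG (m : ℕ) : Set (List (Fin m ⊕ Fin m)) :=
  {w | ∀ i : Fin m, Sum.inr i ∈ w →
    ∃ u v : List (Fin m ⊕ Fin m),
      w = u ++ Sum.inr i :: v ∧ Sum.inr i ∉ v ∧ Sum.inl i ∈ v}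

/-- The language `J`: words of `H` none of whose proper prefixes lie in `H`. -/
def langJ (m : ℕ) : Set (List (Fin m ⊕ Fin m)) :=
  {w | w ∈ langH m ∧
    ∀ u v : List (Fin m ⊕ Fin m), w = u ++ v → v ≠ [] → u ∉ langH m}

lemma lastOcc {α : Type*} {x : α} {l : List α} (h : x ∈ l) :
    ∃ u v, l = u ++ x :: v ∧ x ∉ v := by
  classical
  induction l with
  | nil => simp at h
  | cons a t ih =>
    by_cases hx : x ∈ t
    · obtain ⟨u, v, he, hv⟩ := ih hx
      exact ⟨a :: u, v, by rw [he]; rfl, hv⟩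
    · have hxa : x = a := by
        rcases List.mem_cons.1 h with h' | h'
        · exact h'
        · exact absurd h' hx
      exact ⟨[], t, by simp [hxa], hx⟩

lemma splitCases {α : Type*} {a b e v : List α} {x y : α}
    (h : a ++ x :: b = e ++ y :: v) :
    (a = e ∧ x = y ∧ b = v) ∨ y ∈ b ∨ x ∈ v := by
  rcases List.append_eq_append_iff.1 h with ⟨t, h1, h2⟩ | ⟨t, h1, h2⟩
  · cases t with
    | nil =>
      simp at h1 h2
      exact Or.inl ⟨h1.symm, h2.1, h2.2⟩
    | cons c s =>
      right; left
      have : x :: b = c :: (s ++ y :: v) := by simpa using h2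
      have hb : b = s ++ y :: v := (List.cons.injEq _ _ _ _ ▸ this).2
      simp [hb]
  · cases t with
    | nil =>
      simp at h1 h2
      exact Or.inl ⟨h1, h2.1.symm, h2.2.symm⟩
    | cons c s =>
      right; right
      have : y :: v = c :: (s ++ x :: b) := by simpa using h2
      have hv : v = s ++ x :: b := (List.cons.injEq _ _ _ _ ▸ this).2
      simp [hv]

lemma concat_mem_H {m : ℕ} {j g : List (Fin m ⊕ Fin m)}
    (hj : j ∈ langH m) (hg : g ∈ langG m) : j ++ g ∈ langH m := by
  intro i
  classical
  rcases Classical.em ((Sum.inr i : Fin m ⊕ Fin m) ∈ g) with hd | hd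
  · obtain ⟨u, v, hge, hdv, hcv⟩ := hg i hd
    obtain ⟨u', v', hve, hcv'⟩ := lastOcc hcv
    refine ⟨j ++ u ++ Sum.inr i :: u', v', ?_, hcv', ?_⟩
    · rw [hge, hve]; simp
    · intro hmem
      exact hdv (by rw [hve]; simp [hmem])
  · rcases Classical.em ((Sum.inl i : Fin m ⊕ Fin m) ∈ g) with hc | hc
    · obtain ⟨u, v, hge, hcv⟩ := lastOcc hc
      refine ⟨j ++ u, v, by rw [hge]; simp, hcv, ?_⟩
      intro hmem
      exact hd (by rw [hge]; simp [hmem])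
    · obtain ⟨u, v, hje, hcv, hdv⟩ := hj i
      refine ⟨u, v ++ g, by rw [hje]; simp, ?_, ?_⟩
      · simp [hcv, hc]
      · simp [hdv, hd]

/-- `H = J.G`, a well-defined concatenation:
every word of `H` factors as `j ++ g` with `j ∈ J`, `g ∈ G`; conversely every such
concatenation lies in `H`; and the factorisation is unique. -/
theorem stmt5 (m : ℕ) (hm : 1 ≤ m) :
    langH m = {w | ∃ j ∈ langJ m, ∃ g ∈ langG m, w = j ++ g} ∧
    ∀ j g j' g' : List (Fin m ⊕ Fin m),
      j ∈ langJ m → g ∈ langG m → j' ∈ langJ m → g' ∈ langG m →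
      j ++ g = j' ++ g' → j = j' ∧ g = g' := by
  classical
  constructor
  · ext w
    constructor
    · intro hw
      have hex : ∃ n, w.take n ∈ langH m := ⟨w.length, by simpa using hw⟩
      set n := Nat.find hex with hn
      have hjH : w.take n ∈ langH m := Nat.find_spec hex
      refine ⟨w.take n, ⟨hjH, ?_⟩, w.drop n, ?_, (List.take_append_drop n w).symm⟩
      · intro u v huv hv hu
        have hlen : u.length < n := by
          have h1 : (w.take n).length = u.length + v.length := by
            rw [huv]; simp
          have h2 : (w.take n).length ≤ n := by simp
          have h3 : 1 ≤ v.length := List.length_pos_iff.2 hv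
          omega
        have hu' : w.take u.length = u := by
          have : (w.take n).take u.length = u := by
            rw [huv]; exact List.take_left
          rwa [List.take_take, min_eq_left hlen.le] at this
        exact Nat.find_min hex hlen (by rw [hu']; exact hu)
      · intro i hd
        obtain ⟨u, v, hge, hdv⟩ := lastOcc hd
        obtain ⟨a, b, hwe, hcb, hdb⟩ := hw i
        have hwe2 : w = (w.take n ++ u) ++ Sum.inr i :: v := by
          conv_lhs => rw [← List.take_append_drop n w]
          rw [hge]; simp
        rcases splitCases (hwe ▸ hwe2 : a ++ Sum.inl i :: b = (w.take n ++ u) ++ Sum.inr i :: v)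
          with ⟨_, hxy, _⟩ | hmem | hmem
        · exact absurd hxy (by simp)
        · exact absurd hmem hdb
        · exact ⟨u, v, hge, hdv, hmem⟩
    · rintro ⟨j, hj, g, hg, rfl⟩
      exact concat_mem_H hj.1 hg
  · intro j g j' g' hj hg hj' hg' heq
    rcases List.append_eq_append_iff.1 heq with ⟨t, h1, h2⟩ | ⟨t, h1, h2⟩
    · cases t with
      | nil => simp at h1 h2; exact ⟨h1.symm, h2⟩
      | cons c s =>
        exact absurd hj.1 (hj'.2 j (c :: s) h1 (by simp))
    · cases t with
      | nil => simp at h1 h2; exact ⟨h1, h2.symm⟩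
      | cons c s =>
        exact absurd hj'.1 (hj.2 j' (c :: s) h1 (by simp))
end
end

section
/- For every real x, the exponential generating function of the language H satisfies φ̂_H(x) = Σ_{w∈H} π(w) x^{|w|}/|w|! = (1−p)^m (e^{x/m} − 1)^m. -/
noncomputable section

namespace Stmt6Aux

open Finset Function
open scoped Classical

/-- per-letter weight -/
def wt (m : ℕ) (p : ℝ) : (Fin m ⊕ Fin m) → ℝ :=
  Sum.elim (fun _ => (1 - p) / (m : ℝ)) (fun _ => p / (m : ℝ))

def IsLast {n m : ℕ} (g : Fin n → Fin m) (j : Fin n) : Prop :=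
  ∀ k, j < k → g k ≠ g j

def Good {n m : ℕ} (f : Fin n → Fin m ⊕ Fin m) : Prop :=
  ∀ i, ∃ j, f j = Sum.inl i ∧ ∀ k, j < k → f k ≠ Sum.inl i ∧ f k ≠ Sum.inr i

def pk {n m : ℕ} (g : Fin n → Fin m) (b : Fin n → Bool) : Fin n → Fin m ⊕ Fin m :=
  fun j => if b j then Sum.inl (g j) else Sum.inr (g j)

lemma pk_bijective {n m : ℕ} :
    Function.Bijective (fun gb : (Fin n → Fin m) × (Fin n → Bool) => pk gb.1 gb.2) := by
  apply Function.bijective_iff_has_inverse.2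
  refine ⟨fun f => (fun j => Sum.elim id id (f j), fun j => (f j).isLeft), ?_, ?_⟩
  · rintro ⟨g, b⟩
    refine Prod.ext (funext fun j => ?_) (funext fun j => ?_) <;>
      rcases hb : b j <;> simp [pk, hb]
  · intro f
    funext j
    rcases hf : f j <;> simp [pk, hf]

lemma last_spec {n m : ℕ} {g : Fin n → Fin m} (hg : Surjective g) (i : Fin m) :
    ∃ j, g j = i ∧ IsLast g j := by
  have hne : (univ.filter fun j => g j = i).Nonempty := by
    obtain ⟨j, hj⟩ := hg i
    exact ⟨j, by simp [hj]⟩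
  set j := (univ.filter fun j => g j = i).max' hne with hj
  have hji : g j = i := by
    have := Finset.max'_mem _ hne
    simpa using this
  refine ⟨j, hji, fun k hk hgk => ?_⟩
  have : k ∈ univ.filter fun j => g j = i := by simp [hgk, hji]
  exact absurd (Finset.le_max' _ _ this) (not_le.2 hk)

lemma card_last {n m : ℕ} {g : Fin n → Fin m} (hg : Surjective g) :
    #(univ.filter fun j => IsLast g j) = m := by
  have h2 : #(univ : Finset (Fin m)) = m := by simp
  have h1 : #(univ.filter fun j => IsLast g j) = #(univ : Finset (Fin m)) := by
    apply Finset.card_nbij (fun j => g j)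
    · intro a _; simp
    · intro a ha b hb hab
      simp only [coe_filter, Set.mem_setOf_eq] at ha hb
      rcases lt_trichotomy a b with h | h | h
      · exact absurd hab.symm (ha.2 b h)
      · exact h
      · exact absurd hab (hb.2 a h)
    · intro i _
      obtain ⟨j, hji, hjl⟩ := last_spec hg i
      exact ⟨j, by simpa using hjl, hji⟩
  rw [h1, h2]

lemma good_pk_iff {n m : ℕ} (g : Fin n → Fin m) (b : Fin n → Bool) :
    Good (pk g b) ↔ Surjective g ∧ ∀ j, IsLast g j → b j = true := by
  have hne : ∀ (k : Fin n) (i : Fin m),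
      (pk g b k ≠ Sum.inl i ∧ pk g b k ≠ Sum.inr i) ↔ g k ≠ i := by
    intro k i; rcases hb : b k <;> simp [pk, hb]
  constructor
  · intro h
    have hpk : ∀ (j : Fin n) (i : Fin m), pk g b j = Sum.inl i → g j = i ∧ b j = true := by
      intro j i hj
      rcases hb : b j <;> simp [pk, hb] at hj <;> simp [hj, hb]
    have hsurj : Surjective g := by
      intro i
      obtain ⟨j, hj, -⟩ := h i
      exact ⟨j, (hpk j i hj).1⟩
    refine ⟨hsurj, fun j hjl => ?_⟩
    obtain ⟨j', hj', hk'⟩ := h (g j)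
    obtain ⟨hgj', hbj'⟩ := hpk j' (g j) hj'
    rcases lt_trichotomy j j' with hlt | heq | hgt
    · exact absurd hgj' (hjl j' hlt)
    · rw [heq]; exact hbj'
    · exact absurd rfl ((hne j (g j)).1 (hk' j hgt))
  · rintro ⟨hsurj, hb⟩
    intro i
    obtain ⟨j, hji, hjl⟩ := last_spec hsurj i
    have hbj : b j = true := hb j hjl
    refine ⟨j, by simp [pk, hbj, hji], fun k hk => (hne k i).2 ?_⟩
    intro hgk
    exact hjl k hk (by rw [hgk, hji])

lemma wordWeight_ofFn {n m : ℕ} (p : ℝ) (f : Fin n → Fin m ⊕ Fin m) :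
    wordWeight m p (List.ofFn f) = ∏ j, wt m p (f j) := by
  rw [wordWeight, List.map_ofFn, List.prod_ofFn]
  rfl

lemma mem_langH_ofFn {n m : ℕ} (f : Fin n → Fin m ⊕ Fin m) :
    List.ofFn f ∈ langH m ↔ Good f := by
  constructor
  · intro h i
    obtain ⟨u, v, hw, hv1, hv2⟩ := h i
    have hlen : (List.ofFn f).length = n := List.length_ofFn
    have hlen2 : u.length + (1 + v.length) = n := by
      have := congrArg List.length hw
      simp at this
      omega
    have hul : u.length < n := by omega
    refine ⟨⟨u.length, hul⟩, ?_, ?_⟩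
    · have h0 : u.length < (List.ofFn f).length := by omega
      calc f ⟨u.length, hul⟩ = (List.ofFn f)[u.length]'h0 := by
              rw [List.getElem_ofFn]
            _ = (u ++ Sum.inl i :: v)[u.length]'(by simp) := List.getElem_of_eq hw h0
            _ = Sum.inl i := by
              rw [List.getElem_append_right (le_refl u.length)]
              simp
    · intro k hk
      have hk' : u.length < (k : ℕ) := hk
      have h0 : (k : ℕ) < (List.ofFn f).length := by omega
      have hfk : f k = v[(k : ℕ) - u.length - 1]'(by omega) := by
        calc f k = (List.ofFn f)[(k : ℕ)]'h0 := by
                rw [List.getElem_ofFn]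
              _ = (u ++ Sum.inl i :: v)[(k : ℕ)]'(by simp; omega) := List.getElem_of_eq hw h0
              _ = v[(k : ℕ) - u.length - 1]'(by omega) := by
                rw [List.getElem_append_right (by omega : u.length ≤ (k : ℕ))]
                rw [List.getElem_cons]
                simp [show ¬((k : ℕ) - u.length = 0) by omega]
      have hmem : f k ∈ v := hfk ▸ List.getElem_mem _
      exact ⟨fun hh => hv1 (hh ▸ hmem), fun hh => hv2 (hh ▸ hmem)⟩
  · intro h i
    obtain ⟨j, hj1, hj2⟩ := h i
    have hjn : (j : ℕ) < (List.ofFn f).length := by simp [j.isLt]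
    refine ⟨(List.ofFn f).take j, (List.ofFn f).drop (j + 1), ?_, ?_, ?_⟩
    · conv_lhs => rw [← List.take_append_drop (j : ℕ) (List.ofFn f)]
      congr 1
      rw [List.drop_eq_getElem_cons hjn]
      congr 1
      rw [List.getElem_ofFn]
      simpa using hj1
    · intro hmem
      obtain ⟨t, ht, hEq⟩ := List.mem_iff_getElem.1 hmem
      rw [List.getElem_drop] at hEq
      have hlt : (j : ℕ) + 1 + t < n := by
        simp only [List.length_drop, List.length_ofFn] at ht
        omega
      rw [List.getElem_ofFn] at hEq
      exact (hj2 ⟨(j : ℕ) + 1 + t, hlt⟩ (by simp only [Fin.lt_def]; omega)).1 hEq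
    · intro hmem
      obtain ⟨t, ht, hEq⟩ := List.mem_iff_getElem.1 hmem
      rw [List.getElem_drop] at hEq
      have hlt : (j : ℕ) + 1 + t < n := by
        simp only [List.length_drop, List.length_ofFn] at ht
        omega
      rw [List.getElem_ofFn] at hEq
      exact (hj2 ⟨(j : ℕ) + 1 + t, hlt⟩ (by simp only [Fin.lt_def]; omega)).2 hEq

lemma sum_good {n m : ℕ} (p : ℝ) :
    ∑ f : Fin n → Fin m ⊕ Fin m, (if Good f then ∏ j, wt m p (f j) else 0)
      = (#(univ.filter fun g : Fin n → Fin m => Surjective g) : ℝ)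
          * ((1 - p) ^ m * (1 / (m : ℝ)) ^ n) := by
  rw [← Fintype.sum_bijective _ pk_bijective
    (fun gb => if Good (pk gb.1 gb.2) then ∏ j, wt m p (pk gb.1 gb.2 j) else 0)
    (fun f => if Good f then ∏ j, wt m p (f j) else 0) (fun gb => rfl)]
  rw [Fintype.sum_prod_type]
  have key : ∀ g : Fin n → Fin m,
      (∑ b : Fin n → Bool, if Good (pk g b) then ∏ j, wt m p (pk g b j) else 0)
        = if Surjective g then (1 - p) ^ m * (1 / (m : ℝ)) ^ n else 0 := by
    intro g
    by_cases hg : Surjective g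
    · rw [if_pos hg]
      have hmn : m ≤ n := by
        simpa using Fintype.card_le_of_surjective g hg
      set c : Fin n → Bool → ℝ := fun j y =>
        if IsLast g j ∧ y = false then 0 else (if y then (1 - p) / m else p / m) with hc
      have h1 : ∀ b : Fin n → Bool,
          (if Good (pk g b) then ∏ j, wt m p (pk g b j) else 0) = ∏ j, c j (b j) := by
        intro b
        by_cases hb : ∀ j, IsLast g j → b j = true
        · rw [if_pos ((good_pk_iff g b).2 ⟨hg, hb⟩)]
          apply Finset.prod_congr rfl
          intro j _
          have hne : ¬(IsLast g j ∧ b j = false) := by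
            rintro ⟨hl, hf⟩
            rw [hb j hl] at hf
            exact Bool.noConfusion hf
          rw [hc]
          simp only [if_neg hne]
          rcases hbj : b j <;> simp [pk, wt, hbj]
        · rw [if_neg (fun hgood => hb ((good_pk_iff g b).1 hgood).2)]
          symm
          push_neg at hb
          obtain ⟨j, hjl, hjb⟩ := hb
          apply Finset.prod_eq_zero (mem_univ j)
          simp only [Bool.not_eq_true] at hjb
          simp [hc, hjl, hjb]
      rw [Finset.sum_congr rfl fun b _ => h1 b]
      rw [← Fintype.piFinset_univ, Finset.sum_prod_piFinset]
      have h2 : ∀ j, (∑ y ∈ (univ : Finset Bool), c j y)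
          = if IsLast g j then (1 - p) / m else 1 / m := by
        intro j
        rw [Fintype.sum_bool, hc]
        by_cases hj : IsLast g j
        · simp [hj]
        · simp only [hj, false_and, if_false, if_true, Bool.false_eq_true]
          rw [← add_div]
          norm_num
      rw [Finset.prod_congr rfl fun j _ => h2 j]
      rw [Finset.prod_ite _ _]
      rw [Finset.prod_const, Finset.prod_const, card_last hg]
      have h3 : #(univ.filter fun j => ¬IsLast g j) = n - m := by
        have := Finset.card_filter_add_card_filter_not
          (s := (univ : Finset (Fin n))) (p := fun j => IsLast g j)
        rw [card_last hg] at this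
        simp only [Finset.card_univ, Fintype.card_fin] at this
        omega
      rw [h3]
      have e1 : ((1 - p) / (m : ℝ)) ^ m = (1 - p) ^ m * (1 / (m : ℝ)) ^ m := by
        rw [div_pow, one_div, inv_pow, div_eq_mul_inv]
      rw [e1, mul_assoc, ← pow_add, Nat.add_sub_cancel' hmn]
    · rw [if_neg hg]
      apply Finset.sum_eq_zero
      intro b _
      rw [if_neg (fun hgood => hg ((good_pk_iff g b).1 hgood).1)]
  rw [Finset.sum_congr rfl fun g _ => key g]
  rw [← Finset.sum_filter, Finset.sum_const, nsmul_eq_mul]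

lemma surj_card_eq {n m : ℕ} (hm : 1 ≤ m) :
    (#(univ.filter fun g : Fin n → Fin m => Surjective g) : ℤ)
      = ∑ t ∈ (univ : Finset (Fin m)).powerset, (-1 : ℤ) ^ #t * (#tᶜ : ℤ) ^ n := by
  classical
  set S : Fin m → Finset (Fin n → Fin m) := fun i => univ.filter (fun g => ∀ j, g j ≠ i) with hS
  have h1 : (univ : Finset (Fin m)).inf (fun i => (S i)ᶜ)
      = univ.filter (fun g => Surjective g) := by
    have hne : (univ : Finset (Fin m)).Nonempty := ⟨⟨0, hm⟩, mem_univ _⟩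
    rw [← Finset.inf'_eq_inf hne]
    ext g
    rw [Finset.mem_filter]
    simp [hS, Surjective, not_forall]
  have h2 : ∀ t ∈ (univ : Finset (Fin m)).powerset,
      t.inf S = Fintype.piFinset fun _ : Fin n => tᶜ := by
    intro t _
    rcases t.eq_empty_or_nonempty with rfl | ht
    · simp [Fintype.piFinset_univ]
    · rw [← Finset.inf'_eq_inf ht]
      ext g
      simp only [Finset.mem_inf', Fintype.mem_piFinset, Finset.mem_compl, hS,
        Finset.mem_filter, Finset.mem_univ, true_and]
      constructor
      · intro h j hjt
        exact h _ hjt j rfl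
      · intro h i hit j hji
        exact h j (by rw [hji]; exact hit)
  rw [← h1, Finset.inclusion_exclusion_card_inf_compl]
  apply Finset.sum_congr rfl
  intro t ht
  rw [h2 t ht, Fintype.card_piFinset]
  simp

lemma exp_tsum (z : ℝ) : Real.exp z = ∑' n : ℕ, z ^ n / n.factorial := by
  rw [Real.exp_eq_exp_ℝ, NormedSpace.exp_eq_tsum_div]

lemma egf_surj {m : ℕ} (hm : 1 ≤ m) (y : ℝ) :
    ∑' n : ℕ, (#(univ.filter fun g : Fin n → Fin m => Surjective g) : ℝ) * y ^ n / n.factorial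
      = (Real.exp y - 1) ^ m := by
  have hc : ∀ n : ℕ, (#(univ.filter fun g : Fin n → Fin m => Surjective g) : ℝ)
      = ∑ t ∈ (univ : Finset (Fin m)).powerset, (-1 : ℝ) ^ #t * (#tᶜ : ℝ) ^ n := by
    intro n
    have := surj_card_eq (n := n) hm
    exact_mod_cast congrArg (fun z : ℤ => (z : ℝ)) this
  calc ∑' n : ℕ, (#(univ.filter fun g : Fin n → Fin m => Surjective g) : ℝ) * y ^ n / n.factorial
      = ∑' n : ℕ, ∑ t ∈ (univ : Finset (Fin m)).powerset,
          (-1 : ℝ) ^ #t * (((#tᶜ : ℝ) * y) ^ n / n.factorial) := by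
        apply tsum_congr
        intro n
        rw [hc n, Finset.sum_mul, Finset.sum_div]
        apply Finset.sum_congr rfl
        intro t _
        rw [mul_pow]
        ring
    _ = ∑ t ∈ (univ : Finset (Fin m)).powerset,
          ∑' n : ℕ, (-1 : ℝ) ^ #t * (((#tᶜ : ℝ) * y) ^ n / n.factorial) := by
        apply Summable.tsum_finsetSum
        intro t _
        exact (Real.summable_pow_div_factorial _).mul_left _
    _ = ∑ t ∈ (univ : Finset (Fin m)).powerset, (-1 : ℝ) ^ #t * Real.exp ((#tᶜ : ℝ) * y) := by
        apply Finset.sum_congr rfl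
        intro t _
        rw [tsum_mul_left, exp_tsum]
    _ = (Real.exp y - 1) ^ m := by
        rw [show (Real.exp y - 1) ^ m = ∏ _i : Fin m, (Real.exp y - 1) by
          rw [Finset.prod_const, Finset.card_univ, Fintype.card_fin]]
        rw [Finset.prod_sub]
        apply Finset.sum_congr rfl
        intro t _
        rw [Finset.prod_const, Finset.prod_const, Real.exp_nat_mul,
          Finset.compl_eq_univ_sdiff, one_pow, mul_one]


def F0 (m : ℕ) (p x : ℝ) (w : List (Fin m ⊕ Fin m)) : ℝ :=
  wordWeight m p w * x ^ w.length / (Nat.factorial w.length : ℝ)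

lemma indicator_ofFn (m : ℕ) (p x : ℝ) (n : ℕ) (f : Fin n → Fin m ⊕ Fin m) :
    Set.indicator (langH m) (F0 m p x) (List.ofFn f)
      = (if Good f then ∏ j, wt m p (f j) else 0) * (x ^ n / (Nat.factorial n : ℝ)) := by
  rw [Set.indicator_apply]
  by_cases h : Good f
  · rw [if_pos ((mem_langH_ofFn f).2 h), if_pos h]
    rw [F0, wordWeight_ofFn, List.length_ofFn]
    ring
  · rw [if_neg (fun hh => h ((mem_langH_ofFn f).1 hh)), if_neg h, zero_mul]

lemma wt_nonneg {m : ℕ} {p : ℝ} (hp0 : 0 ≤ p) (hp1 : p ≤ 1) (a : Fin m ⊕ Fin m) :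
    0 ≤ wt m p a := by
  rcases a with i | i <;> simp only [wt, Sum.elim_inl, Sum.elim_inr]
  · exact div_nonneg (by linarith) (Nat.cast_nonneg m)
  · exact div_nonneg hp0 (Nat.cast_nonneg m)

lemma sum_wt (m : ℕ) (hm : 1 ≤ m) (p : ℝ) :
    ∑ a : Fin m ⊕ Fin m, wt m p a = 1 := by
  have hm0 : (m : ℝ) ≠ 0 := Nat.cast_ne_zero.2 (by omega)
  rw [Fintype.sum_sum_type]
  simp only [wt, Sum.elim_inl, Sum.elim_inr, Finset.sum_const, Finset.card_univ,
    Fintype.card_fin, nsmul_eq_mul]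
  field_simp
  ring

lemma sum_prod_wt (m n : ℕ) (hm : 1 ≤ m) (p : ℝ) :
    ∑ f : Fin n → Fin m ⊕ Fin m, ∏ j, wt m p (f j) = 1 := by
  rw [← Fintype.piFinset_univ, Finset.sum_prod_piFinset]
  rw [Finset.prod_congr rfl fun j _ => sum_wt m hm p]
  simp

end Stmt6Aux

/-- exponential generating function of `H`:
for every real `x`, `∑_{w ∈ H} π(w) x^{|w|}/|w|! = (1-p)^m (e^{x/m} - 1)^m`. -/
theorem stmt6 (m : ℕ) (hm : 1 ≤ m) (p : ℝ) (hp : p ∈ Set.Ico (0:ℝ) 1) (x : ℝ) :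
    ∑' w : langH m,
        wordWeight m p (w : List (Fin m ⊕ Fin m))
          * x ^ (w : List (Fin m ⊕ Fin m)).length
          / (Nat.factorial (w : List (Fin m ⊕ Fin m)).length : ℝ)
      = (1 - p) ^ m * (Real.exp (x / m) - 1) ^ m := by
  classical
  open Finset Function Stmt6Aux in
  obtain ⟨hp0, hp1⟩ := hp
  have hp1' : p ≤ 1 := le_of_lt hp1
  have hm0 : (m : ℝ) ≠ 0 := Nat.cast_ne_zero.2 (by omega)
  have hGfib : ∀ n : ℕ,
      ∑ f : Fin n → Fin m ⊕ Fin m, (∏ j, wt m p (f j)) * (|x| ^ n / (Nat.factorial n : ℝ))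
        = |x| ^ n / (Nat.factorial n : ℝ) := by
    intro n
    rw [← Finset.sum_mul, sum_prod_wt m n hm p, one_mul]
  have hGsum : Summable (fun σ : Σ n : ℕ, Fin n → Fin m ⊕ Fin m =>
      (∏ j, wt m p (σ.2 j)) * (|x| ^ σ.1 / (Nat.factorial σ.1 : ℝ))) := by
    apply (summable_sigma_of_nonneg ?_).2 ⟨fun n => (hasSum_fintype _).summable, ?_⟩
    · rintro ⟨n, f⟩
      exact mul_nonneg (Finset.prod_nonneg fun j _ => wt_nonneg hp0 hp1' (f j)) (by positivity)
    · apply Summable.congr (Real.summable_pow_div_factorial |x|)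
      intro n
      rw [tsum_fintype]
      exact (hGfib n).symm
  have hTsum : Summable (fun σ : Σ n : ℕ, Fin n → Fin m ⊕ Fin m =>
      Set.indicator (langH m) (F0 m p x) (List.ofFn σ.2)) := by
    apply Summable.of_norm_bounded hGsum
    rintro ⟨n, f⟩
    show ‖Set.indicator (langH m) (F0 m p x) (List.ofFn f)‖
      ≤ (∏ j, wt m p (f j)) * (|x| ^ n / (Nat.factorial n : ℝ))
    rw [indicator_ofFn]
    by_cases h : Good f
    · rw [if_pos h]
      rw [Real.norm_eq_abs, abs_mul, abs_div, abs_pow]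
      rw [abs_of_nonneg (Finset.prod_nonneg fun j _ => wt_nonneg hp0 hp1' (f j))]
      rw [Nat.abs_cast]
    · rw [if_neg h, zero_mul, norm_zero]
      exact mul_nonneg (Finset.prod_nonneg fun j _ => wt_nonneg hp0 hp1' (f j)) (by positivity)
  calc ∑' w : langH m,
        wordWeight m p (w : List (Fin m ⊕ Fin m))
          * x ^ (w : List (Fin m ⊕ Fin m)).length
          / (Nat.factorial (w : List (Fin m ⊕ Fin m)).length : ℝ)
      = ∑' w : List (Fin m ⊕ Fin m), Set.indicator (langH m) (F0 m p x) w :=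
        tsum_subtype (langH m) (F0 m p x)
    _ = ∑' σ : Σ n : ℕ, Fin n → Fin m ⊕ Fin m,
          Set.indicator (langH m) (F0 m p x) (List.ofFn σ.2) :=
        (Equiv.tsum_eq (List.equivSigmaTuple (α := Fin m ⊕ Fin m)).symm
          (Set.indicator (langH m) (F0 m p x))).symm
    _ = ∑' n : ℕ, ∑' f : Fin n → Fin m ⊕ Fin m,
          Set.indicator (langH m) (F0 m p x) (List.ofFn f) := Summable.tsum_sigma hTsum
    _ = ∑' n : ℕ, (1 - p) ^ m
          * ((#(univ.filter fun g : Fin n → Fin m => Surjective g) : ℝ)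
              * (x / m) ^ n / (Nat.factorial n : ℝ)) := by
        apply tsum_congr
        intro n
        rw [tsum_fintype]
        rw [Finset.sum_congr rfl fun f _ => indicator_ofFn m p x n f]
        rw [← Finset.sum_mul, sum_good p]
        field_simp
        ring
    _ = (1 - p) ^ m * ∑' n : ℕ,
          (#(univ.filter fun g : Fin n → Fin m => Surjective g) : ℝ)
            * (x / m) ^ n / (Nat.factorial n : ℝ) := tsum_mul_left
    _ = (1 - p) ^ m * (Real.exp (x / m) - 1) ^ m := by rw [egf_surj hm (x / m)]
end
end

section
/- For every real x, the exponential generating function of the language G satisfies φ̂_G(x) = Σ_{w∈G} π(w) x^{|w|}/|w|! = [ (1−p)(e^{x/m} − 1) + 1 ]^m. -/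
noncomputable section

open Finset
open scoped Classical

lemma mem_langG_iff {m : ℕ} (w : List (Fin m ⊕ Fin m)) :
    w ∈ langG m ↔ ∀ (i : Fin m) (j : ℕ) (hj : j < w.length),
      w[j] = Sum.inr i → ∃ k, ∃ hk : k < w.length, j < k ∧ w[k] = Sum.inl i := by
  constructor
  · intro hw i j hj hji
    have hmem : Sum.inr i ∈ w := by
      rw [List.mem_iff_getElem]; exact ⟨j, hj, hji⟩
    obtain ⟨u, v, hw', hv, hvl⟩ := hw i hmem
    rw [List.append_cons] at hw'
    set s := u ++ [Sum.inr i] with hs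
    have hslen : s.length = u.length + 1 := by simp [hs]
    have hwlen : w.length = s.length + v.length := by rw [hw', List.length_append]
    have hju : j < s.length := by
      by_contra h
      push_neg at h
      have hjv : j - s.length < v.length := by omega
      have : v[j - s.length] = Sum.inr i := by
        rw [← hji, List.getElem_of_eq hw' hj, List.getElem_append_right h]
      exact hv (this ▸ List.getElem_mem hjv)
    obtain ⟨t, ht, htv⟩ := List.mem_iff_getElem.1 hvl
    refine ⟨s.length + t, by omega, by omega, ?_⟩
    rw [List.getElem_of_eq hw' (by omega), List.getElem_append_right (by omega)]
    simpa using htv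
  · intro h i hmem
    obtain ⟨j₁, hj₁, hj₁v⟩ := List.mem_iff_getElem.1 hmem
    classical
    set S : Finset (Fin w.length) := univ.filter (fun j => w[(j:ℕ)] = Sum.inr i) with hS
    have hSne : S.Nonempty := ⟨⟨j₁, hj₁⟩, by simp [hS, hj₁v]⟩
    set j₀ := S.max' hSne with hj₀def
    have hj₀mem : (j₀ : Fin w.length) ∈ S := S.max'_mem hSne
    have hj₀v : w[(j₀:ℕ)] = Sum.inr i := by simpa [hS] using hj₀mem
    have hj₀max : ∀ j : Fin w.length, w[(j:ℕ)] = Sum.inr i → (j:ℕ) ≤ (j₀:ℕ) := by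
      intro j hj
      exact S.le_max' j (by simp [hS, hj])
    refine ⟨w.take j₀, w.drop (j₀+1), ?_, ?_, ?_⟩
    · rw [← hj₀v]
      rw [List.getElem_cons_drop]
      exact (List.take_append_drop _ _).symm
    · intro hmemv
      obtain ⟨t, ht, htv⟩ := List.mem_iff_getElem.1 hmemv
      rw [List.getElem_drop] at htv
      have hlt : j₀ + 1 + t < w.length := by
        rw [List.length_drop] at ht; omega
      have := hj₀max ⟨j₀ + 1 + t, hlt⟩ htv
      simp at this; omega
    · obtain ⟨k, hk, hjk, hkv⟩ := h i j₀ j₀.isLt hj₀v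
      rw [List.mem_iff_getElem]
      have hlen : k - (j₀ + 1) < (w.drop (j₀+1)).length := by
        rw [List.length_drop]; omega
      refine ⟨k - (j₀+1), hlen, ?_⟩
      rw [List.getElem_drop]
      have : j₀ + 1 + (k - (j₀ + 1)) = k := by omega
      simp_rw [this]; exact hkv

lemma ofFn_mem_langG_iff {m n : ℕ} (f : Fin n → Fin m ⊕ Fin m) :
    List.ofFn f ∈ langG m ↔
      ∀ (i : Fin m) (j : Fin n), f j = Sum.inr i → ∃ k : Fin n, j < k ∧ f k = Sum.inl i := by
  rw [mem_langG_iff]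
  simp only [List.length_ofFn, List.getElem_ofFn]
  constructor
  · intro h i j hj
    obtain ⟨k, hk, hjk, hkv⟩ := h i j j.isLt (by simpa using hj)
    exact ⟨⟨k, hk⟩, hjk, by simpa using hkv⟩
  · intro h i j hj hjv
    obtain ⟨k, hjk, hkv⟩ := h i ⟨j, hj⟩ (by simpa using hjv)
    exact ⟨k, k.isLt, hjk, by simpa using hkv⟩

def colType {m n : ℕ} (g : Fin n → Fin m) (t : Fin n → Bool) : Fin n → Fin m ⊕ Fin m :=
  fun j => if t j then Sum.inl (g j) else Sum.inr (g j)

def Mset {m n : ℕ} (g : Fin n → Fin m) : Finset (Fin n) :=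
  univ.filter (fun j => ∀ k, g k = g j → k ≤ j)

lemma colType_mem_iff {m n : ℕ} (g : Fin n → Fin m) (t : Fin n → Bool) :
    List.ofFn (colType g t) ∈ langG m ↔ ∀ j ∈ Mset g, t j = true := by
  rw [ofFn_mem_langG_iff]
  constructor
  · intro h j hj
    simp only [Mset, mem_filter, mem_univ, true_and] at hj
    by_contra ht
    have : colType g t j = Sum.inr (g j) := by simp [colType, ht]
    obtain ⟨k, hjk, hkv⟩ := h (g j) j this
    have hgk : g k = g j := by
      by_contra hne
      simp only [colType] at hkv
      split at hkv <;> simp_all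
    exact absurd (hj k hgk) (by omega)
  · intro h i j hj
    have htj : t j = false := by
      by_contra ht
      simp only [colType, Bool.not_eq_false] at hj ht
      rw [if_pos ht] at hj; exact absurd hj (by simp)
    have hgj : g j = i := by
      simp only [colType, htj, if_neg Bool.false_ne_true] at hj
      · simpa using hj
    -- the max of the fiber of j
    set F : Finset (Fin n) := univ.filter (fun k => g k = g j) with hF
    have hFne : F.Nonempty := ⟨j, by simp [hF]⟩
    set k₀ := F.max' hFne with hk₀
    have hk₀g : g k₀ = g j := by have := F.max'_mem hFne; simpa [hF] using this
    have hk₀max : ∀ k, g k = g j → k ≤ k₀ := fun k hk => F.le_max' k (by simp [hF, hk])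
    have hk₀M : k₀ ∈ Mset g := by
      simp only [Mset, mem_filter, mem_univ, true_and]
      intro k hk; exact hk₀max k (hk.trans hk₀g)
    have ht₀ : t k₀ = true := h k₀ hk₀M
    refine ⟨k₀, ?_, ?_⟩
    · rcases lt_or_eq_of_le (hk₀max j rfl) with h' | h'
      · exact h'
      · rw [h'] at htj; rw [htj] at ht₀; exact absurd ht₀ (by simp)
    · simp [colType, ht₀, hk₀g, hgj]

lemma sum_types {m n : ℕ} (p : ℝ) (g : Fin n → Fin m) :
    ∑ t : Fin n → Bool, (if (∀ j ∈ Mset g, t j = true)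
        then ∏ j, (if t j then (1-p)/m else p/m) else 0)
      = (1/(m:ℝ))^n * (1-p)^(Mset g).card := by
  classical
  have step1 : ∀ t : Fin n → Bool,
      (if (∀ j ∈ Mset g, t j = true) then ∏ j, (if t j then (1-p)/m else p/m) else 0)
        = ∏ j, (if (j ∈ Mset g → t j = true) then (if t j then (1-p)/m else p/m) else 0) := by
    intro t
    split_ifs with h
    · exact Finset.prod_congr rfl fun j _ => by rw [if_pos (fun hj => h j hj)]
    · push_neg at h
      obtain ⟨j, hj, htj⟩ := h
      exact (Finset.prod_eq_zero (mem_univ j) (by rw [if_neg (by simp [hj, htj])])).symm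
  rw [Finset.sum_congr rfl fun t _ => step1 t]
  have hps := Finset.prod_univ_sum (κ := fun _ : Fin n => Bool) (fun _ => univ)
    (fun j b => if (j ∈ Mset g → b = true) then (if b then (1-p)/(m:ℝ) else p/m) else 0)
  rw [Fintype.piFinset_univ] at hps
  rw [← hps]
  have step2 : ∀ j : Fin n,
      (∑ b : Bool, if (j ∈ Mset g → b = true) then (if b then (1-p)/m else p/m) else 0)
        = (1/(m:ℝ)) * (if j ∈ Mset g then (1-p) else 1) := by
    intro j
    rw [Fintype.sum_bool]
    by_cases hj : j ∈ Mset g <;> simp [hj] <;> ring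
  rw [Finset.prod_congr rfl fun j _ => step2 j, Finset.prod_mul_distrib, Finset.prod_const,
    Finset.prod_ite_mem, univ_inter, Finset.prod_const]
  simp [card_univ]

lemma card_Mset {m n : ℕ} (g : Fin n → Fin m) :
    (Mset g).card = (univ.image g).card := by
  classical
  apply Finset.card_nbij (fun j => g j)
  · intro j hj; simp [Finset.mem_image]
  · intro j hj j' hj' hgj
    simp only [Mset, Finset.coe_filter, Set.mem_setOf_eq, mem_univ, true_and] at hj hj'
    exact le_antisymm (hj' j hgj) (hj j' hgj.symm)
  · intro i hi
    simp only [coe_image, coe_univ, Set.image_univ, Set.mem_range] at hi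
    obtain ⟨j, rfl⟩ := hi
    set F : Finset (Fin n) := univ.filter (fun k => g k = g j) with hF
    have hFne : F.Nonempty := ⟨j, by simp [hF]⟩
    set k₀ := F.max' hFne with hk₀
    have hk₀g : g k₀ = g j := by have := F.max'_mem hFne; simpa [hF] using this
    refine ⟨k₀, ?_, hk₀g⟩
    simp only [Mset, Finset.coe_filter, Set.mem_setOf_eq, mem_univ, true_and]
    intro k hk
    exact F.le_max' k (by simp [hF, hk.trans hk₀g])

lemma sum_colors {n m : ℕ} (p : ℝ) :
    ∑ g : Fin n → Fin m, (1-p)^((univ : Finset (Fin n)).image g).card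
      = ∑ k ∈ Finset.range (m+1), (m.choose k : ℝ) * p^k * (1-p)^(m-k) * ((m-k : ℕ) : ℝ)^n := by
  classical
  have step1 : ∀ g : Fin n → Fin m, ((1:ℝ)-p)^(univ.image g).card
      = ∏ i : Fin m, ((if i ∈ univ.image g then (0:ℝ) else p) + (1-p)) := by
    intro g
    have : ∀ i : Fin m, ((if i ∈ univ.image g then (0:ℝ) else p) + (1-p))
        = (if i ∈ univ.image g then (1-p) else 1) := by
      intro i; split_ifs <;> ring
    rw [Finset.prod_congr rfl fun i _ => this i, Finset.prod_ite_mem, univ_inter,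
      Finset.prod_const]
  simp_rw [step1, Finset.prod_add]
  rw [Finset.sum_comm]
  have step2 : ∀ S ∈ (univ : Finset (Fin m)).powerset,
      ∑ g : Fin n → Fin m, (∏ i ∈ S, (if i ∈ univ.image g then (0:ℝ) else p))
          * ∏ i ∈ univ \ S, (1-p)
        = p^S.card * (1-p)^(m - S.card) * ((m - S.card : ℕ) : ℝ)^n := by
    intro S hS
    have hcard : (univ \ S).card = m - S.card := by
      rw [Finset.card_sdiff_of_subset (subset_univ S), card_univ, Fintype.card_fin]
    rw [← Finset.sum_mul, Finset.prod_const, hcard]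
    have hg : ∀ g : Fin n → Fin m, (∏ i ∈ S, (if i ∈ univ.image g then (0:ℝ) else p))
        = p^S.card * ∏ j : Fin n, (if g j ∈ S then (0:ℝ) else 1) := by
      intro g
      by_cases h : ∀ j, g j ∉ S
      · rw [Finset.prod_congr rfl (g := fun _ => p) (fun i hi => by
          rw [if_neg]; simp only [Finset.mem_image, mem_univ, true_and]
          rintro ⟨j, rfl⟩; exact h j hi),
          Finset.prod_const,
          Finset.prod_congr rfl (g := fun _ => (1:ℝ)) (fun j _ => if_neg (h j)),
          Finset.prod_const]
        ring
      · push_neg at h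
        obtain ⟨j, hj⟩ := h
        have h1 : (g j) ∈ univ.image g := Finset.mem_image.2 ⟨j, mem_univ j, rfl⟩
        have hz1 : (∏ i ∈ S, (if i ∈ univ.image g then (0:ℝ) else p)) = 0 :=
          Finset.prod_eq_zero hj (if_pos h1)
        have hz2 : (∏ j' : Fin n, (if g j' ∈ S then (0:ℝ) else 1)) = 0 :=
          Finset.prod_eq_zero (mem_univ j) (if_pos hj)
        rw [hz1, hz2]; ring
    have hsumg : (∑ g : Fin n → Fin m, ∏ i ∈ S, (if i ∈ univ.image g then (0:ℝ) else p))
        = p^S.card * ((m - S.card : ℕ) : ℝ)^n := by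
      rw [Finset.sum_congr rfl fun g _ => hg g, ← Finset.mul_sum]
      congr 1
      have hps := Finset.prod_univ_sum (κ := fun _ : Fin n => Fin m) (fun _ => univ)
        (fun (_ : Fin n) (c : Fin m) => if c ∈ S then (0:ℝ) else 1)
      rw [Fintype.piFinset_univ] at hps
      rw [← hps]
      have hsum : (∑ c : Fin m, if c ∈ S then (0:ℝ) else 1) = ((m - S.card : ℕ) : ℝ) := by
        have : ∀ c : Fin m, (if c ∈ S then (0:ℝ) else 1) = (if c ∈ univ \ S then (1:ℝ) else 0) := by
          intro c; simp only [mem_sdiff, mem_univ, true_and]; split_ifs <;> simp_all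
        rw [Finset.sum_congr rfl fun c _ => this c, Finset.sum_ite_mem, univ_inter,
          Finset.sum_const, Finset.card_sdiff_of_subset (subset_univ S), card_univ, Fintype.card_fin]
        simp
      rw [Finset.prod_congr rfl fun j _ => hsum, Finset.prod_const, card_univ, Fintype.card_fin]
    rw [hsumg]; ring
  have hps2 := Finset.sum_powerset_apply_card
    (fun k => p^k * (1-p)^(m-k) * ((m - k : ℕ) : ℝ)^n) (x := (univ : Finset (Fin m)))
  rw [card_univ, Fintype.card_fin] at hps2
  rw [Finset.sum_congr rfl step2, hps2]
  exact Finset.sum_congr rfl fun k _ => by rw [nsmul_eq_mul]; ring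

def pairEquiv (m n : ℕ) : ((Fin n → Fin m) × (Fin n → Bool)) ≃ (Fin n → Fin m ⊕ Fin m) where
  toFun gt := colType gt.1 gt.2
  invFun f := (fun j => Sum.elim id id (f j), fun j => (f j).isLeft)
  left_inv := by
    rintro ⟨g, t⟩
    refine Prod.ext (funext fun j => ?_) (funext fun j => ?_) <;>
      · simp only [colType]; cases h : t j <;> simp [h]
  right_inv f := funext fun j => by
    cases h : f j <;> simp [colType, h]

lemma wordWeight_colType {m n : ℕ} (p : ℝ) (g : Fin n → Fin m) (t : Fin n → Bool) :
    wordWeight m p (List.ofFn (colType g t)) = ∏ j, (if t j then (1-p)/(m:ℝ) else p/m) := by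
  rw [wordWeight, List.map_ofFn, List.prod_ofFn]
  refine Finset.prod_congr rfl fun j _ => ?_
  simp only [Function.comp, colType]
  cases h : t j <;> simp [h]

lemma sum_words {m n : ℕ} (p : ℝ) :
    ∑ f : Fin n → (Fin m ⊕ Fin m),
        (if List.ofFn f ∈ langG m then wordWeight m p (List.ofFn f) else 0)
      = ∑ k ∈ Finset.range (m+1),
          (m.choose k : ℝ) * p^k * (1-p)^(m-k) * ((1/(m:ℝ))^n * ((m-k : ℕ) : ℝ)^n) := by
  classical
  rw [← Equiv.sum_comp (pairEquiv m n)
      (fun f => if List.ofFn f ∈ langG m then wordWeight m p (List.ofFn f) else 0),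
    Fintype.sum_prod_type]
  have hinner : ∀ g : Fin n → Fin m,
      ∑ t : Fin n → Bool,
        (if List.ofFn (colType g t) ∈ langG m then wordWeight m p (List.ofFn (colType g t)) else 0)
      = (1/(m:ℝ))^n * (1-p)^((univ.image g)).card := by
    intro g
    rw [← card_Mset, ← sum_types p g]
    refine Finset.sum_congr rfl fun t _ => ?_
    rw [colType_mem_iff, wordWeight_colType]
    congr 1
  calc ∑ g : Fin n → Fin m, ∑ t : Fin n → Bool,
        (if List.ofFn (colType g t) ∈ langG m then wordWeight m p (List.ofFn (colType g t)) else 0)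
      = ∑ g : Fin n → Fin m, (1/(m:ℝ))^n * (1-p)^((univ.image g)).card :=
        Finset.sum_congr rfl fun g _ => hinner g
    _ = (1/(m:ℝ))^n * ∑ g : Fin n → Fin m, (1-p)^((univ.image g)).card := by
        rw [Finset.mul_sum]
    _ = _ := by
        rw [sum_colors p, Finset.mul_sum]
        exact Finset.sum_congr rfl fun k _ => by ring

lemma wordWeight_nonneg {m n : ℕ} {p : ℝ} (hp0 : 0 ≤ p) (hp1 : p ≤ 1)
    (f : Fin n → Fin m ⊕ Fin m) : 0 ≤ wordWeight m p (List.ofFn f) := by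
  rw [wordWeight, List.map_ofFn, List.prod_ofFn]
  refine Finset.prod_nonneg fun j _ => ?_
  simp only [Function.comp]
  rcases h : f j with i | i <;>
    simp only [Sum.elim_inl, Sum.elim_inr] <;>
    exact div_nonneg (by linarith) (Nat.cast_nonneg m)

lemma sum_wordWeight {m n : ℕ} (hm : 1 ≤ m) (p : ℝ) :
    ∑ f : Fin n → (Fin m ⊕ Fin m), wordWeight m p (List.ofFn f) = 1 := by
  have h1 : ∀ f : Fin n → Fin m ⊕ Fin m, wordWeight m p (List.ofFn f)
      = ∏ j, Sum.elim (fun _ => (1 - p) / (m : ℝ)) (fun _ => p / (m : ℝ)) (f j) := by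
    intro f; rw [wordWeight, List.map_ofFn, List.prod_ofFn]; rfl
  rw [Finset.sum_congr rfl fun f _ => h1 f]
  have hps := Finset.prod_univ_sum (κ := fun _ : Fin n => Fin m ⊕ Fin m) (fun _ => univ)
    (fun (_ : Fin n) (a : Fin m ⊕ Fin m) =>
      Sum.elim (fun _ => (1 - p) / (m : ℝ)) (fun _ => p / (m : ℝ)) a)
  rw [Fintype.piFinset_univ] at hps
  rw [← hps]
  have hm0 : (m : ℝ) ≠ 0 := Nat.cast_ne_zero.2 (by omega)
  have hsum : (∑ a : Fin m ⊕ Fin m,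
      Sum.elim (fun _ => (1 - p) / (m : ℝ)) (fun _ => p / (m : ℝ)) a) = 1 := by
    rw [Fintype.sum_sum_type]
    simp only [Sum.elim_inl, Sum.elim_inr, Finset.sum_const, card_univ, Fintype.card_fin,
      nsmul_eq_mul]
    field_simp
    ring
  rw [Finset.prod_congr rfl fun j _ => hsum, Finset.prod_const, one_pow]

/-- exponential generating function of `G`:
for every real `x`, `∑_{w ∈ G} π(w) x^{|w|}/|w|! = ((1-p)(e^{x/m} - 1) + 1)^m`. -/
theorem stmt7 (m : ℕ) (hm : 1 ≤ m) (p : ℝ) (hp : p ∈ Set.Ico (0:ℝ) 1) (x : ℝ) :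
    ∑' w : langG m,
        wordWeight m p (w : List (Fin m ⊕ Fin m))
          * x ^ (w : List (Fin m ⊕ Fin m)).length
          / (Nat.factorial (w : List (Fin m ⊕ Fin m)).length : ℝ)
      = ((1 - p) * (Real.exp (x / m) - 1) + 1) ^ m := by
  obtain ⟨hp0, hp1⟩ := hp
  have hp1' : p ≤ 1 := le_of_lt hp1
  have hm0 : (m : ℝ) ≠ 0 := Nat.cast_ne_zero.2 (by omega)
  set α := (Fin m ⊕ Fin m)
  set F : List α → ℝ := fun w =>
    (if w ∈ langG m then wordWeight m p w else 0) * x ^ w.length / (Nat.factorial w.length : ℝ) with hF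
  -- Step 1: subtype tsum to indicator tsum
  have step1 : ∑' w : langG m,
      wordWeight m p (w : List α) * x ^ (w : List α).length
        / (Nat.factorial (w : List α).length : ℝ)
      = ∑' w : List α, F w := by
    rw [tsum_subtype (langG m)
      (fun w => wordWeight m p w * x ^ w.length / (Nat.factorial w.length : ℝ))]
    refine tsum_congr fun w => ?_
    by_cases hw : w ∈ langG m <;>
      simp [Set.indicator_apply, hw, hF]
  -- Step 2: reindex by sigma of tuples
  have step2 : ∑' w : List α, F w = ∑' s : (Σ n : ℕ, Fin n → α), F (List.ofFn s.2) := by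
    rw [← Equiv.tsum_eq (List.equivSigmaTuple (α := α)).symm F]
    refine tsum_congr fun s => ?_
    rcases s with ⟨n, f⟩
    rfl
  -- summability
  have habs : ∀ (n : ℕ) (f : Fin n → α), |F (List.ofFn f)| =
      (if List.ofFn f ∈ langG m then wordWeight m p (List.ofFn f) else 0)
        * |x| ^ n / (Nat.factorial n : ℝ) := by
    intro n f
    rw [hF]
    simp only [List.length_ofFn]
    rw [abs_div, abs_mul, abs_pow, Nat.abs_cast]
    congr 2
    split_ifs with h
    · exact abs_of_nonneg (wordWeight_nonneg hp0 hp1' f)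
    · exact abs_zero
  have hbound : ∀ n : ℕ, ∑ f : Fin n → α, |F (List.ofFn f)| ≤ |x| ^ n / (Nat.factorial n : ℝ) := by
    intro n
    rw [Finset.sum_congr rfl fun f _ => habs n f, ← Finset.sum_div, ← Finset.sum_mul]
    have h1 : (∑ f : Fin n → α,
        (if List.ofFn f ∈ langG m then wordWeight m p (List.ofFn f) else 0)) ≤ 1 := by
      rw [← sum_wordWeight (n := n) hm p]
      refine Finset.sum_le_sum fun f _ => ?_
      split_ifs
      · exact le_refl _
      · exact wordWeight_nonneg hp0 hp1' f
    have h2 : (0:ℝ) ≤ |x| ^ n / (Nat.factorial n : ℝ) := by positivity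
    calc (∑ f : Fin n → α,
          (if List.ofFn f ∈ langG m then wordWeight m p (List.ofFn f) else 0)) * |x| ^ n / (Nat.factorial n : ℝ)
        ≤ 1 * |x| ^ n / (Nat.factorial n : ℝ) := by
          have hX : (0:ℝ) ≤ |x|^n := by positivity
          have hnf : (0:ℝ) < (Nat.factorial n : ℝ) := by
            exact_mod_cast Nat.cast_pos.2 (Nat.factorial_pos n)
          exact (div_le_div_iff_of_pos_right hnf).2 (mul_le_mul_of_nonneg_right h1 hX)
      _ = |x| ^ n / (Nat.factorial n : ℝ) := by rw [one_mul]
  -- Summability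
  set T : (Σ n : ℕ, Fin n → α) → ℝ := fun s => F (List.ofFn s.2) with hT
  have hsummAbs : Summable (fun s => |T s|) := by
    rw [summable_sigma_of_nonneg (fun s => abs_nonneg (T s))]
    constructor
    · intro n; exact Summable.of_finite
    · have heq : ∀ n : ℕ, (∑' f : Fin n → α, |T ⟨n, f⟩|)
          = ∑ f : Fin n → α, |F (List.ofFn f)| := fun n => tsum_fintype _
      refine Summable.of_nonneg_of_le (fun n => ?_) (fun n => ?_)
        (Real.summable_pow_div_factorial |x|)
      · rw [heq]; exact Finset.sum_nonneg fun f _ => abs_nonneg _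
      · rw [heq]; exact hbound n
  have hsumm : Summable T := summable_abs_iff.mp hsummAbs
  have step3 : ∑' s : (Σ n : ℕ, Fin n → α), F (List.ofFn s.2)
      = ∑' n : ℕ, ∑ f : Fin n → α, F (List.ofFn f) := by
    rw [hsumm.tsum_sigma]
    exact tsum_congr fun n => tsum_fintype _
  have step4 : ∀ n : ℕ, (∑ f : Fin n → α, F (List.ofFn f))
      = ∑ k ∈ Finset.range (m+1), ((m.choose k : ℝ) * p^k * (1-p)^(m-k))
          * ((((m-k : ℕ) : ℝ)/m * x)^n / (Nat.factorial n : ℝ)) := by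
    intro n
    have hFn : ∀ f : Fin n → α, F (List.ofFn f) =
        (if List.ofFn f ∈ langG m then wordWeight m p (List.ofFn f) else 0)
          * x^n / (Nat.factorial n : ℝ) := by
      intro f; rw [hF]; simp only [List.length_ofFn]
    rw [Finset.sum_congr rfl fun f _ => hFn f, ← Finset.sum_div, ← Finset.sum_mul, sum_words p,
      Finset.sum_mul, Finset.sum_div]
    refine Finset.sum_congr rfl fun k _ => ?_
    have hfac : (Nat.factorial n : ℝ) ≠ 0 := Nat.cast_ne_zero.2 (Nat.factorial_ne_zero n)
    field_simp
    ring
  have hsummk : ∀ k ∈ Finset.range (m+1), Summable (fun n : ℕ =>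
      ((m.choose k : ℝ) * p^k * (1-p)^(m-k))
        * ((((m-k : ℕ) : ℝ)/m * x)^n / (Nat.factorial n : ℝ))) :=
    fun k _ => (Real.summable_pow_div_factorial _).mul_left _
  rw [step1, step2, step3, tsum_congr step4, Summable.tsum_finsetSum hsummk]
  have hexp : ∀ k : ℕ, (∑' n : ℕ, (((m-k : ℕ) : ℝ)/m * x)^n / (Nat.factorial n : ℝ))
      = Real.exp (((m-k : ℕ) : ℝ)/m * x) := by
    intro k
    rw [Real.exp_eq_exp_ℝ, NormedSpace.exp_eq_tsum_div]
  simp_rw [tsum_mul_left, hexp]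
  have hrhs : ((1:ℝ)-p) * (Real.exp (x/m) - 1) + 1 = (1-p) * Real.exp (x/m) + p := by ring
  rw [hrhs, add_pow, ← Finset.sum_range_reflect]
  refine Finset.sum_congr rfl fun j hj => ?_
  have hj' : j ≤ m := by simpa [Nat.lt_succ_iff] using hj
  have hidx : m + 1 - 1 - j = m - j := by omega
  rw [hidx, Nat.choose_symm hj', Nat.sub_sub_self hj']
  have hexpj : Real.exp (((j:ℕ):ℝ)/m * x) = Real.exp (x/m) ^ j := by
    rw [← Real.exp_nat_mul]; congr 1; ring
  rw [hexpj, mul_pow]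
  ring
end
end

section
/- For every real x with 0 < x < 1, the ordinary generating function of the language H satisfies φ_H(x) = Σ_{w∈H} π(w) x^{|w|} = (1−p)^m / C(m/x − 1, m), where C(z,m) = z(z−1)⋯(z−m+1)/m! denotes the generalized binomial coefficient. -/
noncomputable section

attribute [local instance] Classical.propDecidable


namespace Stmt8Aux

abbrev A (m : ℕ) := Fin m ⊕ Fin m

def wt (m : ℕ) (p : ℝ) : A m → ℝ :=
  Sum.elim (fun _ => (1 - p) / (m : ℝ)) (fun _ => p / (m : ℝ))


lemma ww_nil (m : ℕ) (p : ℝ) : wordWeight m p [] = 1 := by simp [wordWeight]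

lemma ww_cons (m : ℕ) (p : ℝ) (a : A m) (w : List (A m)) :
    wordWeight m p (a :: w) = wt m p a * wordWeight m p w := by
  simp [wordWeight, wt]

lemma ww_reverse (m : ℕ) (p : ℝ) (w : List (A m)) :
    wordWeight m p w.reverse = wordWeight m p w := by
  simp [wordWeight, List.prod_reverse]

def Q (m : ℕ) : Finset (Fin m) → List (A m) → Prop
  | S, [] => S = ∅
  | S, Sum.inl i :: r => Q m (S.erase i) r
  | S, Sum.inr i :: r => i ∉ S ∧ Q m S r

@[simp] lemma Q_nil (m : ℕ) (S : Finset (Fin m)) : Q m S [] ↔ S = ∅ := Iff.rfl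
@[simp] lemma Q_inl (m : ℕ) (S : Finset (Fin m)) (i : Fin m) (r : List (A m)) :
    Q m S (Sum.inl i :: r) ↔ Q m (S.erase i) r := Iff.rfl
@[simp] lemma Q_inr (m : ℕ) (S : Finset (Fin m)) (i : Fin m) (r : List (A m)) :
    Q m S (Sum.inr i :: r) ↔ (i ∉ S ∧ Q m S r) := Iff.rfl




lemma Q_iff (m : ℕ) (r : List (A m)) : ∀ S : Finset (Fin m),
    Q m S r ↔ ∀ i ∈ S, ∃ a b : List (A m),
      r = a ++ Sum.inl i :: b ∧ Sum.inl i ∉ a ∧ Sum.inr i ∉ a := by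
  induction r with
  | nil =>
    intro S
    simp only [Q_nil]
    constructor
    · rintro rfl; simp
    · intro h
      rw [Finset.eq_empty_iff_forall_notMem]
      intro i hi
      obtain ⟨a, b, hab, -, -⟩ := h i hi
      exact (List.append_ne_nil_of_right_ne_nil a (List.cons_ne_nil _ _) hab.symm)
  | cons c r ih =>
    intro S
    match c with
    | Sum.inl i =>
      rw [Q_inl, ih]
      constructor
      · intro h j hj
        by_cases hji : j = i
        · subst hji
          exact ⟨[], r, by simp, by simp, by simp⟩
        · obtain ⟨a, b, hab, h1, h2⟩ := h j (Finset.mem_erase.2 ⟨hji, hj⟩)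
          refine ⟨Sum.inl i :: a, b, by simp [hab], ?_, ?_⟩
          · simp only [List.mem_cons, not_or]
            exact ⟨by simp [hji], h1⟩
          · simp only [List.mem_cons, not_or]
            exact ⟨by simp, h2⟩
      · intro h j hj
        obtain ⟨hji, hjS⟩ := Finset.mem_erase.1 hj
        obtain ⟨a, b, hab, h1, h2⟩ := h j hjS
        match a, hab with
        | [], hab => simp at hab; exact absurd hab.1.symm (by simp [hji])
        | (c' :: a'), hab =>
          simp only [List.cons_append, List.cons.injEq] at hab
          refine ⟨a', b, hab.2, fun hm => h1 ?_, fun hm => h2 ?_⟩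
          · exact List.mem_cons_of_mem _ hm
          · exact List.mem_cons_of_mem _ hm
    | Sum.inr i =>
      rw [Q_inr, ih]
      constructor
      · rintro ⟨hiS, h⟩ j hj
        obtain ⟨a, b, hab, h1, h2⟩ := h j hj
        have hji : j ≠ i := fun e => hiS (e ▸ hj)
        refine ⟨Sum.inr i :: a, b, by simp [hab], ?_, ?_⟩
        · simp only [List.mem_cons, not_or]
          exact ⟨by simp, h1⟩
        · simp only [List.mem_cons, not_or]
          exact ⟨by simp [hji], h2⟩
      · intro h
        have hiS : i ∉ S := by
          intro hiS
          obtain ⟨a, b, hab, h1, h2⟩ := h i hiS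
          match a, hab with
          | [], hab => simp at hab
          | (c' :: a'), hab =>
            simp only [List.cons_append, List.cons.injEq] at hab
            exact h2 (hab.1 ▸ List.mem_cons_self)
        refine ⟨hiS, fun j hj => ?_⟩
        have hji : j ≠ i := fun e => hiS (e ▸ hj)
        obtain ⟨a, b, hab, h1, h2⟩ := h j hj
        match a, hab with
        | [], hab => simp at hab
        | (c' :: a'), hab =>
          simp only [List.cons_append, List.cons.injEq] at hab
          refine ⟨a', b, hab.2, fun hm => h1 ?_, fun hm => h2 ?_⟩
          · exact List.mem_cons_of_mem _ hm
          · exact List.mem_cons_of_mem _ hm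

end Stmt8Aux


namespace Stmt8Aux

lemma mem_langH_iff (m : ℕ) (w : List (A m)) :
    w ∈ langH m ↔ Q m Finset.univ w.reverse := by
  rw [Q_iff]
  constructor
  · intro h i _
    obtain ⟨u, v, huv, h1, h2⟩ := h i
    refine ⟨v.reverse, u.reverse, by simp [huv], by simpa using h1, by simpa using h2⟩
  · intro h i
    obtain ⟨a, b, hab, h1, h2⟩ := h i (Finset.mem_univ i)
    refine ⟨b.reverse, a.reverse, ?_, by simpa using h1, by simpa using h2⟩
    have := congrArg List.reverse hab
    simpa using this

end Stmt8Aux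

namespace Stmt8Aux

def Z (m : ℕ) (p : ℝ) (S : Finset (Fin m)) (n : ℕ) : ℝ :=
  ∑ t : Fin n → A m, if Q m S (List.ofFn t) then wordWeight m p (List.ofFn t) else 0

def zrec (m : ℕ) (p : ℝ) : ℕ → ℕ → ℝ
  | k, 0 => if k = 0 then 1 else 0
  | k, n + 1 =>
      ((k : ℝ) * (1 - p) * zrec m p (k - 1) n + ((m : ℝ) - (k : ℝ)) * zrec m p k n) / m

lemma sum_if_mem (m : ℕ) (S : Finset (Fin m)) (a b : ℝ) :
    ∑ i : Fin m, (if i ∈ S then a else b) = S.card * a + ((m : ℝ) - S.card) * b := by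
  rw [Finset.sum_ite]
  have h1 : Finset.filter (fun i => i ∈ S) Finset.univ = S := by
    ext i; simp
  have h2 : Finset.filter (fun i => ¬ i ∈ S) Finset.univ = Sᶜ := by
    ext i; simp
  rw [h1, h2]
  have hc : (Sᶜ.card : ℝ) = (m : ℝ) - S.card := by
    rw [Finset.card_compl]
    rw [Nat.cast_sub (by simpa using Finset.card_le_univ S)]
    simp
  simp [Finset.sum_const, nsmul_eq_mul, hc]

lemma Z_eq (m : ℕ) (p : ℝ) (n : ℕ) : ∀ S : Finset (Fin m),
    Z m p S n = zrec m p S.card n := by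
  induction n with
  | zero =>
    intro S
    rw [Z]
    rw [Fintype.sum_unique]
    have : List.ofFn (default : Fin 0 → A m) = [] := by simp
    rw [this]
    simp only [Q_nil, ww_nil, zrec]
    by_cases h : S = ∅ <;> simp [h, Finset.card_eq_zero]
  | succ n ih =>
    intro S
    have hsplit : Z m p S (n + 1)
        = ∑ a : A m, ∑ t : Fin n → A m,
            (if Q m S (a :: List.ofFn t) then wordWeight m p (a :: List.ofFn t) else 0) := by
      rw [Z, ← Equiv.sum_comp (Fin.consEquiv (fun _ => A m)), Fintype.sum_prod_type]
      refine Finset.sum_congr rfl fun a _ => Finset.sum_congr rfl fun t _ => ?_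
      have : List.ofFn (Fin.cons a t : Fin (n+1) → A m) = a :: List.ofFn t := by
        simp [List.ofFn_succ]
      simp [Fin.consEquiv, this]
    rw [hsplit, Fintype.sum_sum_type]
    have hinl : ∀ i : Fin m, ∑ t : Fin n → A m,
        (if Q m S (Sum.inl i :: List.ofFn t) then wordWeight m p (Sum.inl i :: List.ofFn t) else 0)
        = (1 - p) / m * zrec m p (S.erase i).card n := by
      intro i
      rw [← ih, Z, Finset.mul_sum]
      refine Finset.sum_congr rfl fun t _ => ?_
      rw [Q_inl, ww_cons]
      by_cases h : Q m (S.erase i) (List.ofFn t) <;> simp [h, wt]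
    have hinr : ∀ i : Fin m, ∑ t : Fin n → A m,
        (if Q m S (Sum.inr i :: List.ofFn t) then wordWeight m p (Sum.inr i :: List.ofFn t) else 0)
        = if i ∈ S then 0 else p / m * zrec m p S.card n := by
      intro i
      rw [← ih, Z, Finset.mul_sum]
      by_cases hi : i ∈ S
      · simp only [hi, if_true]
        refine Finset.sum_eq_zero fun t _ => ?_
        simp [hi]
      · simp only [hi, if_false]
        refine Finset.sum_congr rfl fun t _ => ?_
        rw [Q_inr, ww_cons]
        by_cases h : Q m S (List.ofFn t) <;> simp [h, hi, wt]
    rw [Finset.sum_congr rfl (fun i _ => hinl i), Finset.sum_congr rfl (fun i _ => hinr i)]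
    have hsum1 : ∑ i : Fin m, (1 - p) / m * zrec m p (S.erase i).card n
        = ∑ i : Fin m, (if i ∈ S then (1 - p) / m * zrec m p (S.card - 1) n
            else (1 - p) / m * zrec m p S.card n) := by
      refine Finset.sum_congr rfl fun i _ => ?_
      by_cases hi : i ∈ S
      · simp [hi, Finset.card_erase_of_mem hi]
      · simp [hi, Finset.erase_eq_of_notMem hi]
    have hsum2 : ∑ i : Fin m, (if i ∈ S then (0:ℝ) else p / m * zrec m p S.card n)
        = S.card * 0 + ((m : ℝ) - S.card) * (p / m * zrec m p S.card n) := sum_if_mem ..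
    rw [hsum1, sum_if_mem, hsum2]
    show _ = zrec m p S.card (n+1)
    rw [zrec]
    ring

lemma zrec_bounds (m : ℕ) (p : ℝ) (hm : 1 ≤ m) (hp0 : 0 ≤ p) (hp1 : p < 1) (n : ℕ) :
    ∀ k ≤ m, 0 ≤ zrec m p k n ∧ zrec m p k n ≤ 1 := by
  have hmpos : (0:ℝ) < m := by exact_mod_cast hm
  induction n with
  | zero =>
    intro k _
    rw [zrec]
    by_cases h : k = 0 <;> simp [h]
  | succ n ih =>
    intro k hk
    obtain ⟨h0, h1⟩ := ih k hk
    obtain ⟨h0', h1'⟩ := ih (k - 1) (le_trans (Nat.sub_le _ _) hk)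
    have hkr : (k : ℝ) ≤ m := by exact_mod_cast hk
    rw [zrec]
    have hk0 : (0:ℝ) ≤ k := Nat.cast_nonneg k
    have hq0 : (0:ℝ) ≤ 1 - p := by linarith
    constructor
    · apply div_nonneg _ hmpos.le
      have ha : (0:ℝ) ≤ (k:ℝ) * (1 - p) * zrec m p (k-1) n :=
        mul_nonneg (mul_nonneg hk0 hq0) h0'
      have hb : (0:ℝ) ≤ ((m:ℝ) - k) * zrec m p k n := mul_nonneg (by linarith) h0
      linarith
    · rw [div_le_one hmpos]
      have t1 : (1 - p) * zrec m p (k-1) n ≤ 1 := mul_le_one₀ (by linarith) h0' h1'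
      nlinarith [mul_le_mul_of_nonneg_left t1 hk0,
        mul_le_mul_of_nonneg_left h1 (by linarith : (0:ℝ) ≤ (m:ℝ) - k)]

end Stmt8Aux

namespace Stmt8Aux

variable {m : ℕ} {p x : ℝ}

lemma zrec_zero_left (hm : 1 ≤ m) (n : ℕ) : zrec m p 0 n = 1 := by
  have hm0 : (m : ℝ) ≠ 0 := by positivity
  induction n with
  | zero => simp [zrec]
  | succ n ih => simp [zrec, ih, div_self hm0]

lemma zrec_succ_zero (m : ℕ) (p : ℝ) (k : ℕ) : zrec m p (k+1) 0 = 0 := by simp [zrec]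

lemma summable_zrec (hm : 1 ≤ m) (hp0 : 0 ≤ p) (hp1 : p < 1)
    (hx0 : 0 < x) (hx1 : x < 1) {k : ℕ} (hk : k ≤ m) :
    Summable (fun n => zrec m p k n * x ^ n) := by
  refine Summable.of_nonneg_of_le (fun n => ?_) (fun n => ?_)
    (summable_geometric_of_lt_one hx0.le hx1)
  · exact mul_nonneg ((zrec_bounds m p hm hp0 hp1 n k hk).1) (by positivity)
  · calc zrec m p k n * x ^ n ≤ 1 * x ^ n := by
          exact mul_le_mul_of_nonneg_right ((zrec_bounds m p hm hp0 hp1 n k hk).2) (by positivity)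
      _ = x ^ n := one_mul _

lemma tsum_zrec_rec (hm : 1 ≤ m) (hp0 : 0 ≤ p) (hp1 : p < 1)
    (hx0 : 0 < x) (hx1 : x < 1) {k : ℕ} (hk : k + 1 ≤ m) :
    (∑' n, zrec m p (k+1) n * x ^ n) * ((m : ℝ) - ((m : ℝ) - ((k : ℝ)+1)) * x)
      = ((k : ℝ) + 1) * (1 - p) * x * ∑' n, zrec m p k n * x ^ n := by
  have hm0 : (m : ℝ) ≠ 0 := by positivity
  have hS1 : Summable (fun n => zrec m p (k+1) n * x ^ n) :=
    summable_zrec hm hp0 hp1 hx0 hx1 hk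
  have hS0 : Summable (fun n => zrec m p k n * x ^ n) :=
    summable_zrec hm hp0 hp1 hx0 hx1 (le_trans (Nat.le_succ k) hk)
  have hE : (∑' n, zrec m p (k+1) n * x ^ n)
      = ∑' n, (x / m) * ((((k:ℝ)+1) * (1 - p)) * (zrec m p k n * x ^ n)
          + (((m:ℝ) - ((k:ℝ)+1)) * (zrec m p (k+1) n * x ^ n))) := by
    rw [hS1.tsum_eq_zero_add]
    simp only [zrec_succ_zero, zero_mul, zero_add]
    refine tsum_congr fun n => ?_
    show zrec m p (k+1) (n+1) * x ^ (n+1) = _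
    rw [zrec]
    push_cast [Nat.add_sub_cancel]
    ring
  rw [tsum_mul_left] at hE
  rw [Summable.tsum_add ((hS0.mul_left _)) ((hS1.mul_left _))] at hE
  rw [tsum_mul_left, tsum_mul_left] at hE
  set S1 := ∑' n, zrec m p (k+1) n * x ^ n
  set S0 := ∑' n, zrec m p k n * x ^ n
  rw [div_mul_eq_mul_div, eq_div_iff hm0] at hE
  linarith [hE]

end Stmt8Aux


namespace Stmt8Aux

variable {m : ℕ} {p x : ℝ}

lemma ww_nonneg (hp0 : 0 ≤ p) (hp1 : p ≤ 1) (w : List (A m)) : 0 ≤ wordWeight m p w := by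
  induction w with
  | nil => rw [ww_nil]; norm_num
  | cons a w ih =>
    rw [ww_cons]
    refine mul_nonneg ?_ ih
    rcases a with i | i <;> simp only [wt, Sum.elim_inl, Sum.elim_inr] <;>
      exact div_nonneg (by linarith) (Nat.cast_nonneg m)

lemma tsum_zrec_closed (hm : 1 ≤ m) (hp0 : 0 ≤ p) (hp1 : p < 1)
    (hx0 : 0 < x) (hx1 : x < 1) : ∀ k ≤ m,
    (∑' n, zrec m p k n * x ^ n)
        * ((1 - x) * ∏ j ∈ Finset.range k, ((m : ℝ) - ((m : ℝ) - 1 - (j : ℝ)) * x))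
      = (1 - p) ^ k * (Nat.factorial k : ℝ) * x ^ k := by
  intro k
  induction k with
  | zero =>
    intro _
    simp only [Finset.range_zero, Finset.prod_empty, mul_one, pow_zero,
      Nat.factorial_zero, Nat.cast_one, one_mul]
    have h1 : (fun n => zrec m p 0 n * x ^ n) = fun n => x ^ n := by
      funext n; rw [zrec_zero_left hm, one_mul]
    rw [h1, tsum_geometric_of_lt_one hx0.le hx1]
    rw [inv_mul_cancel₀ (by linarith : (1:ℝ) - x ≠ 0)]
  | succ k ihk =>
    intro hk1
    have ih := ihk (le_trans (Nat.le_succ k) hk1)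
    have hrec := tsum_zrec_rec hm hp0 hp1 hx0 hx1 hk1
    rw [Finset.prod_range_succ]
    push_cast [Nat.factorial_succ]
    push_cast at hrec ih
    linear_combination
      ((1 - x) * ∏ j ∈ Finset.range k, ((m : ℝ) - ((m : ℝ) - 1 - (j : ℝ)) * x)) * hrec
      + (((k:ℝ) + 1) * (1 - p) * x) * ih

end Stmt8Aux


open Stmt8Aux

/-- ordinary generating function of `H`:
for `0 < x < 1`, `∑_{w ∈ H} π(w) x^{|w|} = (1-p)^m / C(m/x - 1, m)`. -/
theorem stmt8 (m : ℕ) (hm : 1 ≤ m) (p : ℝ) (hp : p ∈ Set.Ico (0:ℝ) 1)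
    (x : ℝ) (hx0 : 0 < x) (hx1 : x < 1) :
    ∑' w : langH m,
        wordWeight m p (w : List (Fin m ⊕ Fin m))
          * x ^ (w : List (Fin m ⊕ Fin m)).length
      = (1 - p) ^ m / genBinom ((m : ℝ) / x - 1) m := by
  obtain ⟨hp0, hp1⟩ := hp
  have hm0 : (m : ℝ) ≠ 0 := by positivity
  have hmR : (0:ℝ) < m := by exact_mod_cast hm
  -- the summand and its truncated version
  set g : List (A m) → ℝ := fun l => wordWeight m p l * x ^ l.length with hg
  set f : List (A m) → ℝ := fun l => if Q m Finset.univ l then g l else 0 with hf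
  have h1 : (∑' w : langH m, g (w : List (A m))) = ∑' l : List (A m), (langH m).indicator g l :=
    tsum_subtype _ _
  let e : List (A m) ≃ List (A m) :=
    ⟨List.reverse, List.reverse, List.reverse_reverse, List.reverse_reverse⟩
  have h2 : (∑' l : List (A m), (langH m).indicator g l) = ∑' l : List (A m), f l := by
    rw [← Equiv.tsum_eq e ((langH m).indicator g)]
    refine tsum_congr fun l => ?_
    have hmem : (e l) ∈ langH m ↔ Q m Finset.univ l := by
      rw [mem_langH_iff]
      show Q m Finset.univ l.reverse.reverse ↔ _
      rw [List.reverse_reverse]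
    by_cases h : Q m Finset.univ l
    · rw [Set.indicator_of_mem (hmem.2 h)]
      show g l.reverse = f l
      rw [hf]
      simp only [h, if_true, hg]
      rw [ww_reverse, List.length_reverse]
    · rw [Set.indicator_of_notMem (fun hc => h (hmem.1 hc))]
      rw [hf]
      simp [h]
  have h3 : (∑' l : List (A m), f l) = ∑' s : Σ n, Fin n → A m, f (List.ofFn s.2) := by
    rw [← Equiv.tsum_eq (List.equivSigmaTuple (α := A m)).symm f]
    refine tsum_congr fun s => ?_
    rcases s with ⟨n, t⟩
    rfl
  have hfib : ∀ n : ℕ, (∑' t : Fin n → A m, f (List.ofFn t)) = zrec m p m n * x ^ n := by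
    intro n
    rw [tsum_fintype]
    have hpt : ∀ t : Fin n → A m, f (List.ofFn t)
        = (if Q m Finset.univ (List.ofFn t) then wordWeight m p (List.ofFn t) else 0) * x ^ n := by
      intro t
      rw [hf]
      by_cases h : Q m Finset.univ (List.ofFn t) <;>
        simp [h, hg, List.length_ofFn]
    rw [Finset.sum_congr rfl (fun t _ => hpt t), ← Finset.sum_mul]
    have hZ : (∑ t : Fin n → A m,
        (if Q m Finset.univ (List.ofFn t) then wordWeight m p (List.ofFn t) else 0))
        = Z m p Finset.univ n := rfl
    rw [hZ, Z_eq]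
    congr 2
    simp [Finset.card_univ]
  have hG : Summable (fun s : Σ n, Fin n → A m => f (List.ofFn s.2)) := by
    have hnn : ∀ s : Σ n, Fin n → A m, 0 ≤ f (List.ofFn s.2) := by
      intro s
      rw [hf]
      by_cases h : Q m Finset.univ (List.ofFn s.2)
      · simp only [h, if_true, hg]
        exact mul_nonneg (ww_nonneg hp0 hp1.le _) (by positivity)
      · simp [h]
    refine (summable_sigma_of_nonneg hnn).2 ⟨fun n => Summable.of_finite, ?_⟩
    simp only [hfib]
    exact summable_zrec hm hp0 hp1 hx0 hx1 le_rfl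
  have h4 : (∑' s : Σ n, Fin n → A m, f (List.ofFn s.2)) = ∑' n, zrec m p m n * x ^ n := by
    rw [hG.tsum_sigma]
    exact tsum_congr hfib
  have key := tsum_zrec_closed hm hp0 hp1 hx0 hx1 m le_rfl
  set S := ∑' n, zrec m p m n * x ^ n with hS
  have hLHS : (∑' w : langH m, g (w : List (A m))) = S := by
    rw [h1, h2, h3, h4]
  rw [hLHS]
  set E := ∏ j ∈ Finset.range m, ((m : ℝ) - ((m : ℝ) - 1 - (j : ℝ)) * x) with hE
  set P := ∏ j ∈ Finset.range m, ((m : ℝ) / x - 1 - (j : ℝ)) with hP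
  -- key facts about products
  have hPx : P * x ^ m = ∏ j ∈ Finset.range m, ((m : ℝ) - ((j : ℝ) + 1) * x) := by
    have hxm : x ^ m = ∏ _j ∈ Finset.range m, x := by
      rw [Finset.prod_const, Finset.card_range]
    rw [hP, hxm, ← Finset.prod_mul_distrib]
    refine Finset.prod_congr rfl fun j _ => ?_
    field_simp
    ring
  have hE' : E = ∏ j ∈ Finset.range m, ((m : ℝ) - (j : ℝ) * x) := by
    rw [hE, ← Finset.prod_range_reflect (fun j : ℕ => (m : ℝ) - (j : ℝ) * x) m]
    refine Finset.prod_congr rfl fun j hj => ?_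
    have hjm : j < m := Finset.mem_range.1 hj
    have : ((m - 1 - j : ℕ) : ℝ) = (m : ℝ) - 1 - (j : ℝ) := by
      have h1j : j ≤ m - 1 := Nat.le_sub_one_of_lt hjm
      rw [Nat.cast_sub h1j, Nat.cast_sub hm]
      norm_num
    rw [this]
  have hprod : P * x ^ m = (1 - x) * E := by
    have h1 := Finset.prod_range_succ' (fun j : ℕ => (m : ℝ) - (j : ℝ) * x) m
    have h2 := Finset.prod_range_succ (fun j : ℕ => (m : ℝ) - (j : ℝ) * x) m
    simp only [Nat.cast_zero, Nat.cast_add, Nat.cast_one, zero_mul, sub_zero] at h1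
    rw [h2] at h1
    apply mul_right_cancel₀ hm0
    rw [hPx, hE']
    linear_combination -h1
  have hPpos : 0 < P := by
    rw [hP]
    refine Finset.prod_pos fun j hj => ?_
    have hjm : (j : ℝ) < m := by exact_mod_cast Finset.mem_range.1 hj
    have hj0 : (0:ℝ) ≤ j := Nat.cast_nonneg j
    have hj1 : ((j : ℝ) + 1) ≤ (m : ℝ) := by exact_mod_cast Finset.mem_range.1 hj
    have : ((j : ℝ) + 1) < (m : ℝ) / x := by
      rw [lt_div_iff₀ hx0]
      nlinarith [mul_pos (show (0:ℝ) < (j:ℝ) + 1 by positivity)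
        (show (0:ℝ) < 1 - x by linarith)]
    linarith
  -- conclude
  rw [genBinom, div_div_eq_mul_div, eq_div_iff hPpos.ne']
  apply mul_right_cancel₀ (pow_ne_zero m hx0.ne')
  calc S * P * x ^ m = S * ((1 - x) * E) := by rw [mul_assoc, hprod]
    _ = (1 - p) ^ m * (Nat.factorial m : ℝ) * x ^ m := key
end
end

section
/- For every real t < 0, the limit m^{−t} · C(m e^{−t/m}, m)^{−1} → Γ(1−t) holds as m → ∞, where C(z,m) = z(z−1)⋯(z−m+1)/m! denotes the generalized binomial coefficient and Γ is the Gamma function. -/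
noncomputable section

open Filter Finset Real

private lemma prod_shift (z : ℝ) (m : ℕ) :
    ∏ j ∈ Finset.range m, (z - (j : ℝ)) =
      ∏ k ∈ Finset.range m, (z - (m : ℝ) + 1 + (k : ℝ)) := by
  induction m with
  | zero => simp
  | succ m ih =>
    rw [Finset.prod_range_succ, ih, Finset.prod_range_succ']
    congr 1
    · exact Finset.prod_congr rfl fun k _ => by push_cast; ring
    · push_cast; ring

private lemma eps_nonneg (t : ℝ) (m : ℕ) (hm : 1 ≤ m) :
    0 ≤ (m : ℝ) * Real.exp (-t / m) - m + t := by
  have hm0 : (0:ℝ) < m := by exact_mod_cast hm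
  have h := Real.add_one_le_exp (-t / m)
  have h2 := mul_le_mul_of_nonneg_left h hm0.le
  have h3 : (m:ℝ) * (-t / m) = -t := by field_simp
  nlinarith

private lemma eps_le (t : ℝ) (ht : t < 0) (m : ℕ) (hm : -t ≤ m) (hm1 : 1 ≤ m) :
    (m : ℝ) * Real.exp (-t / m) - m + t ≤ 3/4 * t^2 / m := by
  have hm0 : (0:ℝ) < m := by exact_mod_cast hm1
  set x : ℝ := -t / m with hx
  have hx0 : 0 ≤ x := div_nonneg (by linarith) hm0.le
  have hx1 : x ≤ 1 := by rw [hx, div_le_one hm0]; exact hm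
  have h := Real.exp_bound (x := x) (by rw [abs_of_nonneg hx0]; exact hx1) (n := 2) (by norm_num)
  rw [abs_of_nonneg hx0] at h
  simp [Finset.sum_range_succ, Nat.factorial] at h
  have h2 : Real.exp x - 1 - x ≤ 3/4 * x^2 := by
    rw [abs_sub_le_iff] at h
    nlinarith [h.1]
  have hmx : (m:ℝ) * x = -t := by rw [hx]; field_simp
  have h3 := mul_le_mul_of_nonneg_left h2 hm0.le
  have h4 : (m:ℝ) * (3/4 * x^2) = 3/4 * t^2 / m := by
    rw [hx]; field_simp
  nlinarith

private lemma sum_inv_le (m : ℕ) :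
    ∑ k ∈ Finset.range m, ((k:ℝ)+1)⁻¹ ≤ 1 + Real.log m := by
  have h1 := harmonic_le_one_add_log m
  have h2 : (harmonic m : ℝ) = ∑ k ∈ Finset.range m, ((k:ℝ)+1)⁻¹ := by
    rw [harmonic]; push_cast; ring
  linarith

private lemma prod_comp {a e : ℝ} (ha : 1 ≤ a) (he : 0 ≤ e) (m : ℕ) :
    ∏ k ∈ Finset.range m, (a + e + (k:ℝ)) ≤
      (∏ k ∈ Finset.range m, (a + (k:ℝ))) *
        Real.exp (e * ∑ k ∈ Finset.range m, ((k:ℝ)+1)⁻¹) := by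
  have key : ∏ k ∈ Finset.range m, (a + e + (k:ℝ)) ≤
      ∏ k ∈ Finset.range m, ((a + (k:ℝ)) * Real.exp (e * ((k:ℝ)+1)⁻¹)) := by
    refine Finset.prod_le_prod (fun k _ => by positivity) (fun k _ => ?_)
    have hd : (0:ℝ) < (k:ℝ) + 1 := by positivity
    have h1 := Real.add_one_le_exp (e * ((k:ℝ)+1)⁻¹)
    have h2 : (0:ℝ) < a + k := by positivity
    have h3 := mul_le_mul_of_nonneg_left h1 h2.le
    have h4 : e * ((k:ℝ)+1)⁻¹ * ((a:ℝ) + k - ((k:ℝ)+1)) ≥ 0 := by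
      have : (0:ℝ) ≤ (a:ℝ) + k - ((k:ℝ)+1) := by linarith
      positivity
    have h5 : e * ((k:ℝ)+1)⁻¹ * ((k:ℝ)+1) = e := by field_simp
    nlinarith
  calc ∏ k ∈ Finset.range m, (a + e + (k:ℝ)) ≤ _ := key
    _ = _ := by
        rw [Finset.prod_mul_distrib, ← Real.exp_sum, Finset.mul_sum]

private def epsF (t : ℝ) (m : ℕ) : ℝ := (m : ℝ) * Real.exp (-t / m) - m + t
private def Pf (t : ℝ) (m : ℕ) : ℝ := ∏ k ∈ Finset.range m, (1 - t + (k : ℝ))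
private def Qf (t : ℝ) (m : ℕ) : ℝ :=
  ∏ j ∈ Finset.range m, ((m : ℝ) * Real.exp (-t / m) - (j : ℝ))

private lemma Qf_eq (t : ℝ) (m : ℕ) :
    Qf t m = ∏ k ∈ Finset.range m, (1 - t + epsF t m + (k : ℝ)) := by
  rw [Qf, prod_shift]
  exact Finset.prod_congr rfl fun k _ => by rw [epsF]; ring

private theorem main_lim (t : ℝ) (ht : t < 0) :
    Filter.Tendsto
      (fun m : ℕ => (m : ℝ) ^ (-t) * ((Qf t m / (Nat.factorial m : ℝ))⁻¹))
      Filter.atTop (nhds (Real.Gamma (1 - t))) := by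
  have ha1 : (1:ℝ) ≤ 1 - t := by linarith
  have hPpos : ∀ m : ℕ, 0 < Pf t m :=
    fun m => Finset.prod_pos fun k _ => by
      have : (0:ℝ) ≤ k := k.cast_nonneg; linarith
  have hepos : ∀ m : ℕ, 1 ≤ m → 0 ≤ epsF t m := fun m hm => eps_nonneg t m hm
  have hQpos : ∀ m : ℕ, 1 ≤ m → 0 < Qf t m := by
    intro m hm
    rw [Qf_eq]
    refine Finset.prod_pos fun k _ => ?_
    have h1 := hepos m hm
    have : (0:ℝ) ≤ k := k.cast_nonneg
    linarith
  have hlog0 : Tendsto (fun m : ℕ => epsF t m * (1 + Real.log m)) atTop (nhds 0) := by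
    have hub : Tendsto (fun m : ℕ => 3/4 * t^2 * ((1:ℝ)/m + Real.log m / m)) atTop (nhds 0) := by
      have h1 : Tendsto (fun m : ℕ => (1:ℝ)/m) atTop (nhds 0) :=
        tendsto_one_div_atTop_nhds_zero_nat
      have h2 : Tendsto (fun m : ℕ => Real.log m / m) atTop (nhds 0) :=
        (Real.isLittleO_log_id_atTop.tendsto_div_nhds_zero).comp tendsto_natCast_atTop_atTop
      simpa using (tendsto_const_nhds (x := (3/4 * t^2 : ℝ))).mul (h1.add h2)
    refine tendsto_of_tendsto_of_tendsto_of_le_of_le' tendsto_const_nhds hub ?_ ?_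
    · filter_upwards [eventually_ge_atTop 1] with m hm
      have h1 := hepos m hm
      have h2 : (0:ℝ) ≤ Real.log m := Real.log_nonneg (by exact_mod_cast hm)
      positivity
    · filter_upwards [eventually_ge_atTop 1, eventually_ge_atTop ⌈-t⌉₊] with m hm1 hm2
      have hm0 : (0:ℝ) < m := by exact_mod_cast hm1
      have hmt : -t ≤ (m:ℝ) := le_trans (Nat.le_ceil _) (by exact_mod_cast hm2)
      have h1 := eps_le t ht m hmt hm1
      have h2 : (0:ℝ) ≤ 1 + Real.log m := by
        have := Real.log_nonneg (show (1:ℝ) ≤ m by exact_mod_cast hm1); linarith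
      calc epsF t m * (1 + Real.log m) ≤ (3/4 * t^2 / m) * (1 + Real.log m) :=
            mul_le_mul_of_nonneg_right h1 h2
        _ = 3/4 * t^2 * ((1:ℝ)/m + Real.log m / m) := by field_simp
  have hratio : Tendsto (fun m : ℕ => Qf t m / Pf t m) atTop (nhds 1) := by
    have hub : Tendsto (fun m : ℕ => Real.exp (epsF t m * (1 + Real.log m))) atTop (nhds 1) := by
      have := (Real.continuous_exp.tendsto 0).comp hlog0
      simpa [Function.comp_def] using this
    refine tendsto_of_tendsto_of_tendsto_of_le_of_le' tendsto_const_nhds hub ?_ ?_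
    · filter_upwards [eventually_ge_atTop 1] with m hm
      rw [le_div_iff₀ (hPpos m), one_mul, Qf_eq]
      refine Finset.prod_le_prod (fun k _ => ?_) (fun k _ => ?_)
      · have : (0:ℝ) ≤ k := k.cast_nonneg; linarith
      · have := hepos m hm; linarith
    · filter_upwards [eventually_ge_atTop 1] with m hm
      rw [div_le_iff₀ (hPpos m), Qf_eq]
      calc ∏ k ∈ Finset.range m, (1 - t + epsF t m + (k:ℝ))
          ≤ (∏ k ∈ Finset.range m, (1 - t + (k:ℝ))) *
            Real.exp (epsF t m * ∑ k ∈ Finset.range m, ((k:ℝ)+1)⁻¹) :=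
            prod_comp ha1 (hepos m hm) m
        _ ≤ Real.exp (epsF t m * (1 + Real.log m)) * Pf t m := by
            rw [mul_comm]
            refine mul_le_mul_of_nonneg_right ?_ (hPpos m).le
            exact Real.exp_le_exp.mpr
              (mul_le_mul_of_nonneg_left (sum_inv_le m) (hepos m hm))
  have hPQ : Tendsto (fun m : ℕ => Pf t m / Qf t m) atTop (nhds 1) := by
    have := hratio.inv₀ one_ne_zero
    simpa [inv_div] using this
  have hfrac : Tendsto (fun m : ℕ => ((1 - t) + m) / m) atTop (nhds 1) := by
    have h1 : Tendsto (fun m : ℕ => (1-t) * ((1:ℝ)/m) + 1) atTop (nhds 1) := by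
      simpa using ((tendsto_const_nhds (x := (1-t:ℝ))).mul
        tendsto_one_div_atTop_nhds_zero_nat).add (tendsto_const_nhds (x := (1:ℝ)))
    refine h1.congr' ?_
    filter_upwards [eventually_ge_atTop 1] with m hm
    have hm0 : (m:ℝ) ≠ 0 := Nat.cast_ne_zero.mpr (by omega)
    field_simp
  have hG := Real.GammaSeq_tendsto_Gamma (1 - t)
  have hall : Tendsto (fun m : ℕ =>
      Real.GammaSeq (1-t) m * (((1-t) + m)/m) * (Pf t m / Qf t m)) atTop
      (nhds (Real.Gamma (1-t))) := by
    simpa using (hG.mul hfrac).mul hPQ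
  refine hall.congr' ?_
  filter_upwards [eventually_ge_atTop 1] with m hm
  have hm0 : (0:ℝ) < m := by exact_mod_cast hm
  have hQ := hQpos m hm
  have hP := hPpos m
  have hfac : (Nat.factorial m : ℝ) ≠ 0 := Nat.cast_ne_zero.mpr m.factorial_ne_zero
  have hmt : (0:ℝ) < (1-t) + m := by linarith
  have hprod : ∏ j ∈ Finset.range (m+1), ((1-t) + (j:ℝ)) = Pf t m * ((1-t) + m) := by
    rw [Finset.prod_range_succ]; rfl
  rw [Real.GammaSeq, hprod]
  have hpow : (m:ℝ) ^ ((1:ℝ) - t) = (m:ℝ) * (m:ℝ)^(-t) := by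
    rw [show (1:ℝ) - t = 1 + -t by ring, Real.rpow_add hm0, Real.rpow_one]
  rw [hpow]
  field_simp

/-- for every `t < 0`,
`m^{-t} · C(m e^{-t/m}, m)⁻¹ → Γ(1 - t)` as `m → ∞`. -/
theorem stmt12 (t : ℝ) (ht : t < 0) :
    Filter.Tendsto
      (fun m : ℕ => (m : ℝ) ^ (-t) * (genBinom ((m : ℝ) * Real.exp (-t / m)) m)⁻¹)
      Filter.atTop (nhds (Real.Gamma (1 - t))) := by
  have h := main_lim t ht
  simp only [Qf] at h
  simpa only [genBinom] using h
end
end
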